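/- arXiv:1406.7643 — 5 statements merged into one kernel-verified Lean document; each statement's English description precedes it below -/
import Mathlib

section
/- Let E ∈ 𝒦 with 0 < ℋ^s(E) < ∞ for some s > 0, where ℋ^s is the s-dimensional Hausdorff measure. If {0} ∈ Tan(E,x) for ℋ^s-almost all x ∈ E, then the lower s-density of E vanishes almost everywhere: liminf_{r→0} ℋ^s(E ∩ B(x,r)) / (2r)^s = 0 for ℋ^s-almost all x ∈ E. -/
open Metric Set Filter Topology

noncomputable section

/-- `d`-dimensional Euclidean space. -/
abbrev Euc (d : ℕ) := EuclideanSpace ℝ (Fin d)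

/-- The cube `Q = [-1,1]^d`. -/
def cube (d : ℕ) : Set (Euc d) := {x | ∀ i, x i ∈ Set.Icc (-1 : ℝ) 1}

/-- `K ∈ 𝒦`: `K` is a nonempty compact subset of the cube `Q = [-1,1]^d`. -/
def IsKSet (d : ℕ) (K : Set (Euc d)) : Prop :=
  K.Nonempty ∧ IsCompact K ∧ K ⊆ cube d

/-- The collection `𝒦` of nonempty compact subsets of `Q`. -/
def KColl (d : ℕ) : Set (Set (Euc d)) := {K | IsKSet d K}

/-- The zooming map `T_{x,t}(A) = {(y - x)/t : y ∈ A} ∩ Q`. -/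
def zoom (d : ℕ) (x : Euc d) (t : ℝ) (A : Set (Euc d)) : Set (Euc d) :=
  ((fun y => t⁻¹ • (y - x)) '' A) ∩ cube d

/-- `F` is a tangent set of `A` at `x`: `F ∈ 𝒦` and `T_{x,t_n}(A) → F` in the Hausdorff
distance for some sequence `t_n ↓ 0`. -/
def IsTangentSet (d : ℕ) (A : Set (Euc d)) (x : Euc d) (F : Set (Euc d)) : Prop :=
  IsKSet d F ∧ ∃ t : ℕ → ℝ, (∀ n, 0 < t n) ∧ StrictAnti t ∧ Tendsto t atTop (nhds 0) ∧
    Tendsto (fun n => hausdorffDist (zoom d x (t n) A) F) atTop (nhds 0)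

/-- `Tan(A, x)`: the collection of all tangent sets of `A` at `x`. -/
def Tangents (d : ℕ) (A : Set (Euc d)) (x : Euc d) : Set (Set (Euc d)) :=
  {F | IsTangentSet d A x F}

/-- The relation `𝒜 ≲ ℬ`: there is `λ₀ > 0` such that every `A ∈ 𝒜` has, after a
translation-and-rescaling with ratio `λ ∈ (λ₀, λ₀⁻¹)`, a matching set in `ℬ`:
`λ(A - a) = B - b` for some `B ∈ ℬ`, `a ∈ A`, `b ∈ B`. -/
def SubColl (d : ℕ) (𝒜 ℬ : Set (Set (Euc d))) : Prop :=
  ∃ lam0 : ℝ, 0 < lam0 ∧ ∀ A ∈ 𝒜, ∃ B ∈ ℬ, ∃ lam : ℝ, lam0 < lam ∧ lam < lam0⁻¹ ∧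
    ∃ a ∈ A, ∃ b ∈ B, (fun y => lam • (y - a)) '' A = (fun y => y - b) '' B

/-- The equivalence `𝒜 ≈ ℬ`, i.e. `𝒜 ≲ ℬ` and `ℬ ≲ 𝒜`. -/
def ApproxColl (d : ℕ) (𝒜 ℬ : Set (Set (Euc d))) : Prop :=
  SubColl d 𝒜 ℬ ∧ SubColl d ℬ 𝒜

/-- `E` is locally rich: `Tan(E,x) ≈ 𝒦` for every `x ∈ E`. -/
def LocallyRich (d : ℕ) (A : Set (Euc d)) : Prop :=
  ∀ x ∈ A, ApproxColl d (Tangents d A x) (KColl d)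

/-- `𝒦₀`: the nonempty compact subsets of `Q` containing the origin. -/
def KColl0 (d : ℕ) : Set (Set (Euc d)) := {K | IsKSet d K ∧ (0 : Euc d) ∈ K}

/-- `𝒦₀⁺`: the nonempty compact subsets of `Q` containing the origin and contained in the
half-space where the first coordinate is nonnegative. -/
def KColl0plus (d : ℕ) (hd : 0 < d) : Set (Set (Euc d)) :=
  {K | IsKSet d K ∧ (0 : Euc d) ∈ K ∧ ∀ x ∈ K, 0 ≤ x ⟨0, hd⟩}

open MeasureTheory

open scoped ENNReal NNReal

lemma coord_le_norm {d : ℕ} (z : Euc d) (i : Fin d) : |z i| ≤ ‖z‖ := by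
  rw [EuclideanSpace.norm_eq]
  have h1 : |z i| = Real.sqrt (‖z i‖ ^ 2) := by
    rw [Real.sqrt_sq_eq_abs]; simp [Real.norm_eq_abs, abs_abs]
  rw [h1]
  apply Real.sqrt_le_sqrt
  exact Finset.single_le_sum (f := fun j => ‖z j‖^2) (fun j _ => by positivity) (Finset.mem_univ i)

lemma norm_le_sqrt_of_cube {d : ℕ} (z : Euc d) (hz : z ∈ cube d) :
    ‖z‖ ≤ Real.sqrt d := by
  rw [EuclideanSpace.norm_eq]
  apply Real.sqrt_le_sqrt
  calc ∑ i, ‖z i‖ ^ 2 ≤ ∑ _i : Fin d, (1:ℝ) := by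
        apply Finset.sum_le_sum
        intro i _
        have := hz i
        have h1 : |z i| ≤ 1 := abs_le.2 ⟨this.1, this.2⟩
        calc ‖z i‖^2 = |z i|^2 := by rw [Real.norm_eq_abs]
        _ ≤ 1^2 := by apply pow_le_pow_left₀ (abs_nonneg _) h1
        _ = 1 := one_pow 2
    _ = d := by simp


lemma frostman {d : ℕ} {s : ℝ} (hs : 0 < s) (ν : Measure (Euc d)) (hν : ν univ ≠ ⊤)
    {C : ℝ≥0∞} (hC0 : C ≠ 0) (hCt : C ≠ ⊤) {A : Set (Euc d)}
    (hA : ∀ x ∈ A, ∀ δ : ℝ, 0 < δ → ∃ r : ℝ, 0 < r ∧ r ≤ δ ∧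
      C * ENNReal.ofReal ((2*r)^s) ≤ ν (closedBall x r)) :
    μH[s] A ≤ ENNReal.ofReal (4^s) * (ν univ / C) := by
  set δ : ℕ → ℝ := fun n => 1/(n+1) with hδ
  have hδpos : ∀ n, 0 < δ n := fun n => by positivity
  set T : ℕ → Set (Euc d × ℝ) := fun n =>
    {p | p.1 ∈ A ∧ 0 < p.2 ∧ p.2 ≤ δ n ∧
      C * ENNReal.ofReal ((2*p.2)^s) ≤ ν (closedBall p.1 p.2)} with hT
  have hvit : ∀ n, ∃ u ⊆ T n, (u.PairwiseDisjoint fun p => closedBall p.1 p.2) ∧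
      ∀ a ∈ T n, ∃ b ∈ u, closedBall a.1 a.2 ⊆ closedBall b.1 (4 * b.2) :=
    fun n => Vitali.exists_disjoint_subfamily_covering_enlargement_closedBall (T n)
      Prod.fst Prod.snd (δ n) (fun a ha => ha.2.2.1) 4 (by norm_num)
  choose u hu hdisj hcov using hvit
  have hpos : ∀ n, ∀ p ∈ u n, 0 < ν (closedBall p.1 p.2) := by
    intro n p hp
    have hpT := hu n hp
    refine lt_of_lt_of_le ?_ hpT.2.2.2
    have h2 : (0:ℝ) < (2*p.2)^s := Real.rpow_pos_of_pos (by linarith [hpT.2.1]) s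
    exact ENNReal.mul_pos hC0 ((ENNReal.ofReal_pos.2 h2).ne')
  have hcnt : ∀ n, (u n).Countable := by
    intro n
    have hpd : Pairwise (Function.onFun Disjoint fun i : ↥(u n) => closedBall i.1.1 i.1.2) := by
      intro i j hij
      exact hdisj n i.2 j.2 (fun h => hij (Subtype.ext h))
    have hct := MeasureTheory.Measure.countable_meas_pos_of_disjoint_of_meas_iUnion_ne_top
      (μ := ν) (As := fun i : ↥(u n) => closedBall i.1.1 i.1.2)
      (fun i => measurableSet_closedBall) hpd
      (ne_top_of_le_ne_top hν (measure_mono (subset_univ _)))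
    have : {i : ↥(u n) | 0 < ν (closedBall i.1.1 i.1.2)} = univ := by
      ext i; simp [hpos n i.1 i.2]
    rw [this] at hct
    rw [← Set.countable_coe_iff]
    exact (Set.countable_univ_iff).1 hct
  haveI : ∀ n, Countable ↥(u n) := fun n => (hcnt n).to_subtype
  have key := Measure.hausdorffMeasure_le_liminf_tsum (X := Euc d) s A
    (l := atTop) (fun n => ENNReal.ofReal (8 * δ n))
    ?_ (fun n (i : ↥(u n)) => closedBall i.1.1 (4 * i.1.2)) ?_ ?_
  · refine key.trans ?_
    apply Filter.liminf_le_of_frequently_le'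
    apply Frequently.of_forall
    intro n
    -- bound the sum
    have step1 : ∀ i : ↥(u n), EMetric.diam (closedBall i.1.1 (4 * i.1.2)) ^ s ≤
        ENNReal.ofReal (4^s) * ENNReal.ofReal ((2 * i.1.2)^s) := by
      intro i
      have hr := (hu n i.2).2.1
      have hdle : EMetric.diam (closedBall i.1.1 (4 * i.1.2)) ≤ ENNReal.ofReal (8 * i.1.2) := by
        apply EMetric.diam_le
        intro y hy z hz
        rw [edist_dist]
        apply ENNReal.ofReal_le_ofReal
        calc dist y z ≤ dist y i.1.1 + dist z i.1.1 := dist_triangle_right _ _ _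
          _ ≤ 4 * i.1.2 + 4 * i.1.2 := add_le_add hy hz
          _ = 8 * i.1.2 := by ring
      calc EMetric.diam (closedBall i.1.1 (4 * i.1.2)) ^ s ≤ (ENNReal.ofReal (8 * i.1.2)) ^ s :=
            ENNReal.rpow_le_rpow hdle hs.le
        _ = ENNReal.ofReal ((8 * i.1.2) ^ s) :=
            ENNReal.ofReal_rpow_of_pos (by linarith)
        _ = ENNReal.ofReal (4^s * (2 * i.1.2)^s) := by
            congr 1
            rw [← Real.mul_rpow (by norm_num) (by linarith)]
            ring_nf
        _ = ENNReal.ofReal (4^s) * ENNReal.ofReal ((2 * i.1.2)^s) :=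
            ENNReal.ofReal_mul (by positivity)
    have step2 : C * ∑' i : ↥(u n), ENNReal.ofReal ((2 * i.1.2)^s) ≤ ν univ := by
      rw [← ENNReal.tsum_mul_left]
      have hsum : ∑' i : ↥(u n), C * ENNReal.ofReal ((2 * i.1.2)^s) ≤
          ∑' i : ↥(u n), ν (closedBall i.1.1 i.1.2) :=
        ENNReal.tsum_le_tsum (fun i => (hu n i.2).2.2.2)
      refine hsum.trans ?_
      rw [← measure_iUnion ?_ (fun i => measurableSet_closedBall)]
      · exact measure_mono (subset_univ _)
      · intro i j hij
        exact hdisj n i.2 j.2 (fun h => hij (Subtype.ext h))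
    calc ∑' i : ↥(u n), EMetric.diam (closedBall i.1.1 (4 * i.1.2)) ^ s
        ≤ ∑' i : ↥(u n), ENNReal.ofReal (4^s) * ENNReal.ofReal ((2 * i.1.2)^s) :=
          ENNReal.tsum_le_tsum step1
      _ = ENNReal.ofReal (4^s) * ∑' i : ↥(u n), ENNReal.ofReal ((2 * i.1.2)^s) :=
          ENNReal.tsum_mul_left
      _ ≤ ENNReal.ofReal (4^s) * (ν univ / C) := by
          gcongr
          rw [ENNReal.le_div_iff_mul_le (Or.inl hC0) (Or.inl hCt), mul_comm]
          exact step2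
  · -- r tendsto 0
    have h1 : Tendsto (fun n : ℕ => 8 * δ n) atTop (𝓝 0) := by
      have := tendsto_one_div_add_atTop_nhds_zero_nat (𝕜 := ℝ)
      simpa [hδ] using this.const_mul 8
    have := (ENNReal.continuous_ofReal.tendsto 0).comp h1
    simpa [Function.comp_def] using this
  · -- diam bounds
    apply Eventually.of_forall
    intro n i
    have hr := (hu n i.2).2.1
    have hrd := (hu n i.2).2.2.1
    apply EMetric.diam_le
    intro y hy z hz
    rw [edist_dist]
    apply ENNReal.ofReal_le_ofReal
    calc dist y z ≤ dist y i.1.1 + dist z i.1.1 := dist_triangle_right _ _ _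
      _ ≤ 4 * i.1.2 + 4 * i.1.2 := add_le_add hy hz
      _ ≤ 8 * δ n := by linarith
  · -- covering
    apply Eventually.of_forall
    intro n x hx
    obtain ⟨r, hr0, hrδ, hrν⟩ := hA x hx (δ n) (hδpos n)
    have hxT : (x, r) ∈ T n := ⟨hx, hr0, hrδ, hrν⟩
    obtain ⟨b, hb, hsub⟩ := hcov n (x, r) hxT
    exact mem_iUnion.2 ⟨⟨b, hb⟩, hsub (mem_closedBall_self hr0.le)⟩

-- key geometric step
lemma shrink {d : ℕ} {E : Set (Euc d)} {x : Euc d} {t ε : ℝ} (ht : 0 < t) (hε : 0 < ε)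
    (hx : x ∈ E) (hdist : hausdorffDist (zoom d x t E) {(0 : Euc d)} < ε) :
    E ∩ closedBall x t ⊆ closedBall x (ε * t) := by
  have h0cube : (0 : Euc d) ∈ cube d := fun i => by simp
  have h0mem : (0 : Euc d) ∈ zoom d x t E := by
    refine ⟨⟨x, hx, by simp⟩, h0cube⟩
  have hbdd : Bornology.IsBounded (zoom d x t E) := by
    apply (isBounded_closedBall (x := (0:Euc d)) (r := Real.sqrt d)).subset
    intro z hz
    simpa [mem_closedBall, dist_eq_norm] using norm_le_sqrt_of_cube z hz.2
  have hfin : EMetric.hausdorffEdist (zoom d x t E) ({(0:Euc d)} : Set (Euc d)) ≠ ⊤ :=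
    hausdorffEdist_ne_top_of_nonempty_of_bounded ⟨0, h0mem⟩ (singleton_nonempty _)
      hbdd Bornology.isBounded_singleton
  rintro y ⟨hyE, hyb⟩
  set z : Euc d := t⁻¹ • (y - x) with hzdef
  have hnz : ‖z‖ = ‖y - x‖ / t := by
    rw [hzdef, norm_smul]
    rw [norm_inv, Real.norm_eq_abs, abs_of_pos ht]
    ring
  have hnz1 : ‖z‖ ≤ 1 := by
    rw [hnz]
    rw [div_le_one ht]
    simpa [dist_eq_norm] using hyb
  have hzcube : z ∈ cube d := by
    intro i
    have := (coord_le_norm z i).trans hnz1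
    exact abs_le.1 this
  have hzmem : z ∈ zoom d x t E := ⟨⟨y, hyE, rfl⟩, hzcube⟩
  have hle : dist z 0 ≤ hausdorffDist (zoom d x t E) {(0:Euc d)} := by
    have := infDist_le_hausdorffDist_of_mem hzmem hfin
    simpa [infDist_singleton] using this
  have : ‖z‖ < ε := by
    have h2 : dist z 0 = ‖z‖ := by simp
    linarith [hle.trans_lt hdist, h2 ▸ hle.trans_lt hdist]
  have : ‖y - x‖ < ε * t := by
    rw [hnz, div_lt_iff₀ ht] at this
    linarith
  simp only [mem_closedBall, dist_eq_norm]
  linarith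

/-- If `E ⊆ Q` is compact with `0 < ℋ^s(E) < ∞` and `{0} ∈ Tan(E,x)` for `ℋ^s`-a.e.
`x ∈ E`, then the lower `s`-density `liminf_{r→0} ℋ^s(E ∩ B(x,r))/(2r)^s` vanishes for
`ℋ^s`-a.e. `x ∈ E`. -/
theorem lower_density_zero_of_zero_tangent (d : ℕ) (hd : 0 < d) (s : ℝ) (hs : 0 < s)
    (E : Set (Euc d)) (hE : IsKSet d E)
    (hpos : 0 < μH[s] E) (hfin : μH[s] E < ⊤)
    (htan : μH[s] {x ∈ E | ¬ ({(0 : Euc d)} : Set (Euc d)) ∈ Tangents d E x} = 0) :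
    μH[s] {x ∈ E | ¬ liminf
        (fun r : ℝ => μH[s] (E ∩ closedBall x r) / ENNReal.ofReal ((2 * r) ^ s))
        (nhdsWithin 0 (Set.Ioi 0)) = 0} = 0 := by
  have hEmeas : MeasurableSet E := hE.2.1.isClosed.measurableSet
  set D : Euc d → ℝ≥0∞ := fun x => liminf
      (fun r : ℝ => μH[s] (E ∩ closedBall x r) / ENNReal.ofReal ((2 * r) ^ s))
      (nhdsWithin 0 (Set.Ioi 0)) with hD
  set N := {x ∈ E | ¬ ({(0 : Euc d)} : Set (Euc d)) ∈ Tangents d E x} with hN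
  set Bn : ℕ → Set (Euc d) := fun n =>
    {x ∈ E | ({(0 : Euc d)} : Set (Euc d)) ∈ Tangents d E x ∧ ((n : ℝ≥0∞)+1)⁻¹ < D x} with hBn
  have hsub : {x ∈ E | ¬ D x = 0} ⊆ N ∪ ⋃ n, Bn n := by
    rintro x ⟨hxE, hxD⟩
    by_cases htg : ({(0 : Euc d)} : Set (Euc d)) ∈ Tangents d E x
    · right
      obtain ⟨n, hn⟩ := ENNReal.exists_inv_nat_lt hxD
      refine mem_iUnion.2 ⟨n, hxE, htg, lt_of_le_of_lt ?_ hn⟩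
      apply ENNReal.inv_le_inv.2
      exact le_add_of_nonneg_right zero_le_one
    · exact Or.inl ⟨hxE, htg⟩
  have hBn0 : ∀ n, μH[s] (Bn n) = 0 := by
    intro n
    set c : ℝ≥0∞ := ((n : ℝ≥0∞)+1)⁻¹ with hc
    have hc0 : c ≠ 0 := ENNReal.inv_ne_zero.2 (by simp)
    have hct : c ≠ ⊤ := ENNReal.inv_ne_top.2 (by simp)
    -- the Frostman condition for each j
    have hfro : ∀ j : ℕ, μH[s] (Bn n) ≤
        ENNReal.ofReal (4^s) * (μH[s] E / (c * ENNReal.ofReal ((j:ℝ)+1))) := by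
      intro j
      set ε : ℝ := (((j:ℝ)+1)⁻¹) ^ (s⁻¹) with hεdef
      have hε0 : 0 < ε := by positivity
      have hε1 : ε ≤ 1 := by
        rw [hεdef]
        apply Real.rpow_le_one (by positivity) _ (by positivity)
        rw [inv_le_one_iff₀]; right; linarith [Nat.cast_nonneg (α := ℝ) j]
      have hεs : ε⁻¹ ^ s = (j:ℝ)+1 := by
        have h1 : ε ^ s = ((j:ℝ)+1)⁻¹ := by
          rw [hεdef, ← Real.rpow_mul (by positivity), inv_mul_cancel₀ hs.ne', Real.rpow_one]
        rw [Real.inv_rpow hε0.le, h1, inv_inv]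
      have hCj0 : c * ENNReal.ofReal ((j:ℝ)+1) ≠ 0 := by
        apply mul_ne_zero hc0
        simp [ENNReal.ofReal_eq_zero]; positivity
      have hCjt : c * ENNReal.ofReal ((j:ℝ)+1) ≠ ⊤ := ENNReal.mul_ne_top hct ENNReal.ofReal_ne_top
      have happ := frostman hs (μH[s].restrict E) ?_ hCj0 hCjt (A := Bn n) ?_
      · rwa [Measure.restrict_apply_univ] at happ
      · rw [Measure.restrict_apply_univ]; exact hfin.ne
      · rintro x ⟨hxE, htg, hlb⟩ δ hδ
        -- density eventually above c
        have hev : ∀ᶠ r in nhdsWithin (0:ℝ) (Set.Ioi 0),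
            c < μH[s] (E ∩ closedBall x r) / ENNReal.ofReal ((2 * r) ^ s) :=
          eventually_lt_of_lt_liminf hlb
        obtain ⟨δ₀, hδ₀mem, hδ₀⟩ := mem_nhdsGT_iff_exists_Ioo_subset.1 hev
        obtain ⟨hF, t, tpos, tanti, tlim, hdlim⟩ := htg
        have hev1 : ∀ᶠ m in atTop, t m < min δ₀ δ :=
          tlim.eventually_lt_const (lt_min hδ₀mem hδ)
        have hev2 : ∀ᶠ m in atTop, hausdorffDist (zoom d x (t m) E) {(0:Euc d)} < ε :=
          hdlim.eventually_lt_const hε0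
        obtain ⟨m, hm1, hm2⟩ := (hev1.and hev2).exists
        have htm0 : 0 < t m := tpos m
        refine ⟨ε * t m, by positivity, ?_, ?_⟩
        · calc ε * t m ≤ 1 * t m := by gcongr
            _ = t m := one_mul _
            _ ≤ δ := (lt_min_iff.1 hm1).2.le
        · have hshr : E ∩ closedBall x (t m) ⊆ closedBall x (ε * t m) :=
            shrink htm0 hε0 hxE hm2
        -- density at t m
          have hden : c < μH[s] (E ∩ closedBall x (t m)) / ENNReal.ofReal ((2 * t m) ^ s) :=
            hδ₀ ⟨htm0, (lt_min_iff.1 hm1).1⟩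
          have hb0 : ENNReal.ofReal ((2 * t m) ^ s) ≠ 0 := by
            simp only [ne_eq, ENNReal.ofReal_eq_zero, not_le]
            positivity
          have hkey : c * ENNReal.ofReal ((2 * t m) ^ s) ≤ μH[s] (E ∩ closedBall x (t m)) := by
            rw [← ENNReal.le_div_iff_mul_le (Or.inl hb0) (Or.inl ENNReal.ofReal_ne_top)]
            exact hden.le
          have hsplit : ((2 * t m) ^ s : ℝ) = ((j:ℝ)+1) * (2 * (ε * t m)) ^ s := by
            have h1 : (2 * t m : ℝ) = ε⁻¹ * (2 * (ε * t m)) := by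
              field_simp
            rw [h1, Real.mul_rpow (by positivity) (by positivity), hεs]
          have hmono : μH[s] (E ∩ closedBall x (t m)) ≤ μH[s] (E ∩ closedBall x (ε * t m)) := by
            apply measure_mono
            intro y hy
            exact ⟨hy.1, hshr hy⟩
          rw [Measure.restrict_apply measurableSet_closedBall, inter_comm]
          calc c * ENNReal.ofReal ((j:ℝ)+1) * ENNReal.ofReal ((2 * (ε * t m)) ^ s)
              = c * ENNReal.ofReal (((j:ℝ)+1) * (2 * (ε * t m)) ^ s) := by
                rw [mul_assoc, ← ENNReal.ofReal_mul (by positivity)]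
            _ = c * ENNReal.ofReal ((2 * t m) ^ s) := by rw [← hsplit]
            _ ≤ μH[s] (E ∩ closedBall x (t m)) := hkey
            _ ≤ μH[s] (E ∩ closedBall x (ε * t m)) := hmono
    -- let j → ∞
    have hKfin : ENNReal.ofReal (4^s) * (μH[s] E * c⁻¹) ≠ ⊤ :=
      ENNReal.mul_ne_top ENNReal.ofReal_ne_top
        (ENNReal.mul_ne_top hfin.ne (ENNReal.inv_ne_top.2 hc0))
    have htend : Tendsto (fun j : ℕ =>
        ENNReal.ofReal (4^s) * (μH[s] E * c⁻¹) * ((j:ℝ≥0∞))⁻¹) atTop (𝓝 0) := by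
      have h0 := ENNReal.tendsto_inv_nat_nhds_zero
      have := ENNReal.Tendsto.const_mul h0 (Or.inr hKfin)
      simpa using this
    have hle : ∀ j : ℕ, μH[s] (Bn n) ≤
        ENNReal.ofReal (4^s) * (μH[s] E * c⁻¹) * ((j:ℝ≥0∞))⁻¹ := by
      intro j
      refine (hfro j).trans ?_
      have hXj : (j:ℝ≥0∞) ≤ ENNReal.ofReal ((j:ℝ)+1) := by
        rw [← ENNReal.ofReal_natCast j]
        exact ENNReal.ofReal_le_ofReal (by linarith)
      calc ENNReal.ofReal (4^s) * (μH[s] E / (c * ENNReal.ofReal ((j:ℝ)+1)))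
          = ENNReal.ofReal (4^s) * (μH[s] E * c⁻¹) * (ENNReal.ofReal ((j:ℝ)+1))⁻¹ := by
            rw [div_eq_mul_inv, ENNReal.mul_inv (Or.inl hc0) (Or.inl hct)]
            ring
        _ ≤ ENNReal.ofReal (4^s) * (μH[s] E * c⁻¹) * ((j:ℝ≥0∞))⁻¹ := by
            gcongr
    have := ge_of_tendsto' htend hle
    simpa using this
  -- assemble
  have h1 : μH[s] {x ∈ E | ¬ D x = 0} ≤ μH[s] N + μH[s] (⋃ n, Bn n) :=
    (measure_mono hsub).trans (measure_union_le _ _)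
  have h2 : μH[s] (⋃ n, Bn n) = 0 := by
    apply le_antisymm _ zero_le
    calc μH[s] (⋃ n, Bn n) ≤ ∑' n, μH[s] (Bn n) := measure_iUnion_le _
      _ = 0 := by simp [hBn0]
  rw [htan] at h1  -- N measure zero
  simp only [h2, add_zero, zero_add] at h1
  exact le_antisymm h1 zero_le

end
end

section
/- Porosity passes to tangent sets: let 0 < α < 1 and let E ∈ 𝒦 be α-porous, i.e. for every x ∈ ℝ^d and every r > 0 there exists y ∈ ℝ^d such that the open ball U(y, αr) is contained in B(x,r) \ E. Then for every x ∈ E, every tangent set F ∈ Tan(E,x) is also α-porous. -/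
open Metric Set Filter Topology

noncomputable section

/-- `A` is `α`-porous: every closed ball `B(x,r)` contains an open ball of radius `αr`
disjoint from `A`. -/
def IsPorous (d : ℕ) (α : ℝ) (A : Set (Euc d)) : Prop :=
  ∀ x : Euc d, ∀ r : ℝ, 0 < r → ∃ y : Euc d, ball y (α * r) ⊆ closedBall x r \ A


lemma isBounded_cube (d : ℕ) : Bornology.IsBounded (cube d) := by
  rw [isBounded_iff_forall_norm_le]
  refine ⟨Real.sqrt d, fun x hx => ?_⟩
  rw [EuclideanSpace.norm_eq]
  apply Real.sqrt_le_sqrt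
  calc (∑ i, ‖x i‖ ^ 2) ≤ ∑ _i : Fin d, (1 : ℝ) := by
        apply Finset.sum_le_sum
        intro i _
        have h := hx i
        rw [Real.norm_eq_abs]
        have : |x i| ≤ 1 := abs_le.2 ⟨h.1, h.2⟩
        nlinarith [abs_nonneg (x i)]
    _ = d := by simp

lemma zoom_isPorous (d : ℕ) (α : ℝ) (x : Euc d) (t : ℝ) (ht : 0 < t)
    (E : Set (Euc d)) (hpor : IsPorous d α E) : IsPorous d α (zoom d x t E) := by
  intro z r hr
  obtain ⟨y, hy⟩ := hpor (x + t • z) (t * r) (by positivity)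
  refine ⟨t⁻¹ • (y - x), fun w hw => ?_⟩
  have h1 : dist w (t⁻¹ • (y - x)) < α * r := mem_ball.1 hw
  have hw' : dist (x + t • w) y < α * (t * r) := by
    have e1 : dist (x + t • w) y = dist (t • w) (y - x) := by
      rw [dist_eq_norm, dist_eq_norm]
      congr 1
      abel
    have e2 : dist (t • w) (y - x) = t * dist w (t⁻¹ • (y - x)) := by
      conv_lhs => rw [← smul_inv_smul₀ ht.ne' (y - x)]
      rw [dist_smul₀, Real.norm_of_nonneg ht.le]
    rw [e1, e2]
    calc t * dist w (t⁻¹ • (y - x)) < t * (α * r) := by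
          exact (mul_lt_mul_iff_right₀ ht).2 h1
      _ = α * (t * r) := by ring
  have hyball := hy (mem_ball.2 hw')
  constructor
  · have h2 : dist (x + t • w) (x + t • z) ≤ t * r := mem_closedBall.1 hyball.1
    rw [dist_add_left, dist_smul₀, Real.norm_of_nonneg ht.le] at h2
    exact mem_closedBall.2 (le_of_mul_le_mul_left h2 ht)
  · rintro ⟨⟨e, heE, heq⟩, -⟩
    apply hyball.2
    have : x + t • w = e := by
      rw [← heq, smul_inv_smul₀ ht.ne', add_sub_cancel]
    rwa [this]

/-- Porosity passes to tangent sets: if `E ⊆ Q` is a compact `α`-porous set with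
`0 < α < 1`, then every tangent set of `E` at any of its points is also `α`-porous. -/
theorem porosity_of_tangent (d : ℕ) (hd : 0 < d) (α : ℝ) (hα0 : 0 < α) (hα1 : α < 1)
    (E : Set (Euc d)) (hE : IsKSet d E) (hpor : IsPorous d α E) :
    ∀ x ∈ E, ∀ F ∈ Tangents d E x, IsPorous d α F := by
  rintro x hx F ⟨⟨hFne, hFc, hFsub⟩, t, htpos, -, -, hconv⟩
  intro z r hr
  set S : ℕ → Set (Euc d) := fun n => zoom d x (t n) E with hS
  have hS0 : ∀ n, (0 : Euc d) ∈ S n := by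
    intro n
    refine ⟨⟨x, hx, by simp⟩, fun i => ?_⟩
    simp
  have hSbdd : ∀ n, Bornology.IsBounded (S n) := fun n =>
    (isBounded_cube d).subset inter_subset_right
  have hSpor : ∀ n, IsPorous d α (S n) := fun n =>
    zoom_isPorous d α x (t n) (htpos n) E hpor
  have hEdist : ∀ n, EMetric.hausdorffEdist (S n) F ≠ ⊤ := fun n =>
    hausdorffEdist_ne_top_of_nonempty_of_bounded ⟨0, hS0 n⟩ hFne (hSbdd n) hFc.isBounded
  choose y hy using fun n => hSpor n z r hr
  have hyball : ∀ n, y n ∈ closedBall z r := fun n =>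
    ((hy n) (mem_ball_self (by positivity))).1
  obtain ⟨p, hp, φ, hφ, hyp⟩ := (isCompact_closedBall z r).tendsto_subseq hyball
  refine ⟨p, fun w hw => ?_⟩
  have hwp : dist w p < α * r := mem_ball.1 hw
  have hdtend : Tendsto (fun n => dist w (y (φ n))) atTop (nhds (dist w p)) :=
    Tendsto.dist tendsto_const_nhds hyp
  constructor
  · obtain ⟨n, hn⟩ := (hdtend.eventually_lt_const hwp).exists
    exact ((hy (φ n)) (mem_ball.2 hn)).1
  · intro hwF
    set ε := (α * r - dist w p) / 2 with hε
    have hεpos : 0 < ε := by simp only [hε]; linarith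
    have h1 : ∀ᶠ n in atTop, dist w (y (φ n)) < dist w p + ε :=
      hdtend.eventually_lt_const (by linarith)
    have hconv' : Tendsto (fun n => hausdorffDist (S (φ n)) F) atTop (nhds 0) :=
      hconv.comp hφ.tendsto_atTop
    have h2 : ∀ᶠ n in atTop, hausdorffDist (S (φ n)) F < ε :=
      hconv'.eventually_lt_const hεpos
    obtain ⟨n, hn1, hn2⟩ := (h1.and h2).exists
    have hle : infDist w (S (φ n)) ≤ hausdorffDist (S (φ n)) F := by
      rw [hausdorffDist_comm]
      exact infDist_le_hausdorffDist_of_mem hwF (by rw [EMetric.hausdorffEdist_comm]; exact hEdist (φ n))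
    have hge : ε ≤ infDist w (S (φ n)) := by
      by_contra hlt
      obtain ⟨q, hq, hqd⟩ := (infDist_lt_iff ⟨0, hS0 (φ n)⟩).1 (not_le.1 hlt)
      have hqball : q ∉ ball (y (φ n)) (α * r) := fun hmem => ((hy (φ n)) hmem).2 hq
      have : α * r ≤ dist q (y (φ n)) := not_lt.1 (fun h => hqball (mem_ball.2 h))
      have htri : dist q (y (φ n)) ≤ dist q w + dist w (y (φ n)) := dist_triangle _ _ _
      rw [dist_comm] at hqd
      simp only [hε] at hn1 hqd
      linarith
    linarith


end
end

section
/- Sets with the origin as a tangent at all points are null for doubling measures: let E ∈ 𝒦 satisfy {0} ∈ Tan(E,x) for all x ∈ E. Then μ(E) = 0 for every doubling Borel measure μ on Q, i.e. every nontrivial Borel regular measure μ for which there is a constant C ≥ 1 with 0 < μ(B(x,2r) ∩ Q) ≤ C·μ(B(x,r) ∩ Q) < ∞ for all x ∈ Q and r > 0. -/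
open Metric Set Filter Topology

noncomputable section

lemma abs_coord_le {d : ℕ} (v : Euc d) (i : Fin d) : |v i| ≤ ‖v‖ := by
  rw [EuclideanSpace.norm_eq, ← Real.sqrt_sq_eq_abs]
  apply Real.sqrt_le_sqrt
  have : |v i| ^ 2 ≤ ∑ j, ‖v j‖ ^ 2 := by
    refine Finset.single_le_sum (f := fun j => ‖v j‖ ^ 2) (fun j _ => sq_nonneg _)
      (Finset.mem_univ i) |>.trans_eq' ?_
    simp [Real.norm_eq_abs]
  simpa [sq_abs] using this

lemma cube_subset_closedBall (d : ℕ) : cube d ⊆ closedBall (0 : Euc d) (d + 1) := by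
  intro x hx
  rw [mem_closedBall, dist_zero_right, EuclideanSpace.norm_eq]
  have h1 : ∑ i, ‖x i‖ ^ 2 ≤ ((d : ℝ) + 1) ^ 2 := by
    calc ∑ i, ‖x i‖ ^ 2 ≤ ∑ _i : Fin d, (1 : ℝ) := by
          refine Finset.sum_le_sum (fun i _ => ?_)
          have := hx i
          rw [Real.norm_eq_abs, sq_abs]
          nlinarith [this.1, this.2]
      _ = (d : ℝ) := by simp
      _ ≤ ((d : ℝ) + 1) ^ 2 := by nlinarith [Nat.cast_nonneg (α := ℝ) d]
  calc Real.sqrt (∑ i, ‖x i‖ ^ 2) ≤ Real.sqrt (((d : ℝ) + 1) ^ 2) := Real.sqrt_le_sqrt h1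
    _ = (d : ℝ) + 1 := Real.sqrt_sq (by positivity)

open MeasureTheory
open scoped NNReal ENNReal

/-- If `E ⊆ Q` is compact and `{0} ∈ Tan(E,x)` at all `x ∈ E`, then `E` is null for every
nontrivial doubling Borel measure on `Q`. -/
theorem thin_of_zero_tangent_everywhere (d : ℕ) (hd : 0 < d) (E : Set (Euc d))
    (hE : IsKSet d E)
    (htan : ∀ x ∈ E, ({(0 : Euc d)} : Set (Euc d)) ∈ Tangents d E x)
    (μ : Measure (Euc d)) (hμ0 : μ ≠ 0) (hμQ : μ (cube d)ᶜ = 0)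
    (hdoub : ∃ C : ℝ≥0, 1 ≤ C ∧ ∀ x ∈ cube d, ∀ r : ℝ, 0 < r →
      0 < μ (closedBall x (2 * r) ∩ cube d) ∧
      μ (closedBall x (2 * r) ∩ cube d) ≤ C * μ (closedBall x r ∩ cube d) ∧
      μ (closedBall x r ∩ cube d) < ⊤) :
    μ E = 0 := by
  obtain ⟨C, hC1, hC⟩ := hdoub
  have h0Q : (0 : Euc d) ∈ cube d := by intro i; simp
  have hiQ : ∀ S : Set (Euc d), μ (S ∩ cube d) = μ S := fun S => measure_inter_conull hμQ
  -- μ is a finite measure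
  have hQlt : μ (cube d) < ⊤ := by
    have h := (hC 0 h0Q ((d : ℝ) + 1) (by positivity)).2.2
    rwa [Set.inter_eq_self_of_subset_right (cube_subset_closedBall d)] at h
  haveI : IsFiniteMeasure μ := by
    constructor
    have h2 : μ Set.univ ≤ μ (cube d) + μ (cube d)ᶜ := by
      rw [← Set.union_compl_self (cube d)]; exact measure_union_le _ _
    rw [hμQ, add_zero] at h2
    exact lt_of_le_of_lt h2 hQlt
  have hEm : MeasurableSet E := hE.2.1.measurableSet
  by_contra hne
  haveI : (ae (μ.restrict E)).NeBot :=
    ae_neBot.2 (fun h => hne (Measure.restrict_eq_zero.1 h))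
  obtain ⟨x, hxlim, hxE⟩ :=
    ((Besicovitch.ae_tendsto_measure_inter_div μ E).and (ae_restrict_mem hEm)).exists
  have hxQ : x ∈ cube d := hE.2.2 hxE
  obtain ⟨-, t, htpos, -, ht0, hhd⟩ := htan x hxE
  have h1 : Tendsto t atTop (𝓝[>] (0 : ℝ)) :=
    tendsto_nhdsWithin_of_tendsto_nhds_of_eventually_within _ ht0
      (Eventually.of_forall fun n => htpos n)
  have h2 : Tendsto (fun n => μ (E ∩ closedBall x (t n)) / μ (closedBall x (t n)))
      atTop (𝓝 1) := hxlim.comp h1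
  -- constants
  set k : ℝ := ((C : ℝ≥0) : ℝ) ^ 3 with hkdef
  have hk1 : (1 : ℝ) ≤ k := one_le_pow₀ (by exact_mod_cast hC1)
  have hk0 : (0 : ℝ) < k := lt_of_lt_of_le one_pos hk1
  have hu0 : (0 : ℝ) < 1 / (2 * k) := by positivity
  have hu2 : 1 / (2 * k) ≤ 1 / 2 := by
    apply div_le_div_of_nonneg_left one_pos.le (by norm_num)
    linarith
  have hcc : ENNReal.ofReal (1 - 1 / (2 * k)) < 1 := by
    rw [← ENNReal.ofReal_one]
    apply ENNReal.ofReal_lt_ofReal_iff_of_nonneg (by linarith) |>.2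
    linarith
  have hev1 : ∀ᶠ n in atTop, t n < 2 := ht0.eventually_lt_const (by norm_num)
  have hev2 : ∀ᶠ n in atTop,
      hausdorffDist (zoom d x (t n) E) ({(0 : Euc d)} : Set (Euc d)) < 1 / 8 :=
    hhd.eventually_lt_const (by norm_num)
  have hev3 : ∀ᶠ n in atTop, ENNReal.ofReal (1 - 1 / (2 * k)) <
      μ (E ∩ closedBall x (t n)) / μ (closedBall x (t n)) := h2.eventually_const_lt hcc
  obtain ⟨n, h2n, h8n, hcn⟩ := (hev1.and (hev2.and hev3)).exists
  set s : ℝ := t n with hsdef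
  have hs : 0 < s := htpos n
  -- porosity
  have hporo : ∀ w ∈ E, (∀ i, |w i - x i| ≤ s) → dist w x < s / 8 := by
    intro w hw hwc
    have hz : (s⁻¹ • (w - x)) ∈ zoom d x s E := by
      refine ⟨⟨w, hw, rfl⟩, fun i => ?_⟩
      have hco : (s⁻¹ • (w - x)) i = s⁻¹ * (w i - x i) := by simp
      rw [hco, Set.mem_Icc, ← abs_le, abs_mul, abs_of_pos (inv_pos.2 hs)]
      calc s⁻¹ * |w i - x i| ≤ s⁻¹ * s :=
            mul_le_mul_of_nonneg_left (hwc i) (by positivity)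
        _ = 1 := inv_mul_cancel₀ hs.ne'
    have hzb : Bornology.IsBounded (zoom d x s E) :=
      (isBounded_closedBall (x := (0 : Euc d)) (r := (d : ℝ) + 1)).subset
        (fun z hz => cube_subset_closedBall d hz.2)
    have hfin : EMetric.hausdorffEdist (zoom d x s E) ({(0 : Euc d)} : Set (Euc d)) ≠ ⊤ :=
      hausdorffEdist_ne_top_of_nonempty_of_bounded ⟨_, hz⟩ ⟨0, rfl⟩ hzb Bornology.isBounded_singleton
    have hle := infDist_le_hausdorffDist_of_mem hz hfin
    rw [infDist_singleton] at hle
    have hdz : dist (s⁻¹ • (w - x)) 0 = s⁻¹ * ‖w - x‖ := by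
      rw [dist_zero_right, norm_smul, Real.norm_eq_abs, abs_of_pos (inv_pos.2 hs)]
    have hlt : s⁻¹ * ‖w - x‖ < 1 / 8 := by
      rw [← hdz]; exact lt_of_le_of_lt hle h8n
    rw [dist_eq_norm]
    have := mul_lt_mul_of_pos_left hlt hs
    calc ‖w - x‖ = s * (s⁻¹ * ‖w - x‖) := by field_simp
      _ < s * (1 / 8) := this
      _ = s / 8 := by ring
  -- the off-point y
  set i0 : Fin d := ⟨0, hd⟩ with hi0
  set sg : ℝ := if 0 ≤ x i0 then 1 else -1 with hsg
  set y : Euc d := x - (s / 2) • EuclideanSpace.single i0 sg with hy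
  have habs_sg : |sg| = 1 := by rw [hsg]; split_ifs <;> norm_num
  have hyx : dist y x = s / 2 := by
    rw [dist_eq_norm, hy, sub_sub_cancel_left, norm_neg, norm_smul,
      EuclideanSpace.norm_single, Real.norm_eq_abs, Real.norm_eq_abs, habs_sg,
      abs_of_pos (show (0:ℝ) < s / 2 by positivity)]
    ring
  have hyQ : y ∈ cube d := by
    intro i
    have hyi : y i = x i - (s / 2) * (if i = i0 then sg else 0) := by
      rw [hy]; simp [EuclideanSpace.single_apply]
    by_cases hii : i = i0
    · rw [hyi, if_pos hii, hsg]
      have hb := hxQ i0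
      rw [hii]
      split_ifs with hx0
      · constructor <;> [nlinarith [hb.1]; nlinarith [hb.2]]
      · constructor <;> [nlinarith [hb.1]; nlinarith [hb.2, not_le.1 hx0]]
    · rw [hyi, if_neg hii, mul_zero, sub_zero]; exact hxQ i
  -- closedBall y (s/4) misses E
  have hydis : ∀ w ∈ E, w ∉ closedBall y (s / 4) := by
    intro w hw hwB
    rw [mem_closedBall] at hwB
    have hwx : dist w x ≤ 3 * s / 4 := by
      calc dist w x ≤ dist w y + dist y x := dist_triangle _ _ _
        _ ≤ s / 4 + s / 2 := add_le_add hwB hyx.le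
        _ = 3 * s / 4 := by ring
    have hcoord : ∀ i, |w i - x i| ≤ s := by
      intro i
      have h := abs_coord_le (w - x) i
      have hco : (w - x) i = w i - x i := rfl
      rw [hco] at h
      calc |w i - x i| ≤ ‖w - x‖ := h
        _ = dist w x := (dist_eq_norm w x).symm
        _ ≤ 3 * s / 4 := hwx
        _ ≤ s := by linarith
    have hsmall := hporo w hw hcoord
    have hbig : s / 4 ≤ dist w x := by
      have := dist_triangle y w x
      rw [dist_comm y w] at this
      linarith [hyx ▸ this]
    linarith
  -- measure estimates
  have hBsub : closedBall y (s / 4) ⊆ closedBall x s := by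
    intro z hz
    rw [mem_closedBall] at hz ⊢
    calc dist z x ≤ dist z y + dist y x := dist_triangle _ _ _
      _ ≤ s / 4 + s / 2 := add_le_add hz hyx.le
      _ ≤ s := by linarith
  have hdisj : Disjoint (E ∩ closedBall x s) (closedBall y (s / 4)) := by
    rw [Set.disjoint_left]
    exact fun z hz1 hz2 => hydis z hz1.1 hz2
  have hab : μ (E ∩ closedBall x s) + μ (closedBall y (s / 4)) ≤ μ (closedBall x s) := by
    rw [← measure_union hdisj measurableSet_closedBall]
    exact measure_mono (Set.union_subset Set.inter_subset_right hBsub)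
  have hmb : μ (closedBall x s) ≤ (C : ℝ≥0∞) ^ 3 * μ (closedBall y (s / 4)) := by
    have d1 := (hC y hyQ s hs).2.1
    have d2 := (hC y hyQ (s / 2) (by positivity)).2.1
    have d3 := (hC y hyQ (s / 4) (by positivity)).2.1
    rw [show 2 * (s / 2) = s by ring] at d2
    rw [show 2 * (s / 4) = s / 2 by ring] at d3
    have hsub : closedBall x s ⊆ closedBall y (2 * s) := by
      intro z hz
      rw [mem_closedBall] at hz ⊢
      have hxy : dist x y = s / 2 := by rw [dist_comm]; exact hyx
      calc dist z y ≤ dist z x + dist x y := dist_triangle _ _ _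
        _ ≤ s + s / 2 := add_le_add hz hxy.le
        _ ≤ 2 * s := by linarith
    calc μ (closedBall x s) = μ (closedBall x s ∩ cube d) := (hiQ _).symm
      _ ≤ μ (closedBall y (2 * s) ∩ cube d) :=
          measure_mono (Set.inter_subset_inter_left _ hsub)
      _ ≤ (C : ℝ≥0∞) * μ (closedBall y s ∩ cube d) := d1
      _ ≤ (C : ℝ≥0∞) * ((C : ℝ≥0∞) * μ (closedBall y (s / 2) ∩ cube d)) :=
          mul_le_mul_right d2 _
      _ ≤ (C : ℝ≥0∞) * ((C : ℝ≥0∞) * ((C : ℝ≥0∞) * μ (closedBall y (s / 4) ∩ cube d))) :=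
          mul_le_mul_right (mul_le_mul_right d3 _) _
      _ = (C : ℝ≥0∞) ^ 3 * μ (closedBall y (s / 4) ∩ cube d) := by ring
      _ = (C : ℝ≥0∞) ^ 3 * μ (closedBall y (s / 4)) := by rw [hiQ]
  have hbpos : 0 < μ (closedBall y (s / 4)) := by
    have h := (hC y hyQ (s / 8) (by positivity)).1
    rw [show 2 * (s / 8) = s / 4 by ring] at h
    exact h.trans_le (measure_mono Set.inter_subset_left)
  have hmpos : 0 < μ (closedBall x s) := hbpos.trans_le (measure_mono hBsub)
  -- pass to the reals
  set a := μ (E ∩ closedBall x s) with ha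
  set b := μ (closedBall y (s / 4)) with hb
  set m := μ (closedBall x s) with hm
  have hane : a ≠ ⊤ := measure_ne_top μ _
  have hbne : b ≠ ⊤ := measure_ne_top μ _
  have hmne : m ≠ ⊤ := measure_ne_top μ _
  set A := a.toReal with hA
  set B := b.toReal with hB
  set M := m.toReal with hM
  have hMpos : 0 < M := ENNReal.toReal_pos hmpos.ne' hmne
  have hab_real : A + B ≤ M := by
    rw [hA, hB, hM, ← ENNReal.toReal_add hane hbne]
    exact ENNReal.toReal_mono hmne hab
  have hmb_real : M ≤ k * B := by
    have hCne : ((C : ℝ≥0∞) ^ 3) ≠ ⊤ := by simp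
    have := ENNReal.toReal_mono (by
        exact ENNReal.mul_ne_top hCne hbne) hmb
    rw [ENNReal.toReal_mul, ENNReal.toReal_pow, ENNReal.coe_toReal] at this
    exact this
  have hAM : (1 - 1 / (2 * k)) * M < A := by
    have hdivne : a / m ≠ ⊤ := (ENNReal.div_lt_top hane hmpos.ne').ne
    have hlt := (ENNReal.toReal_lt_toReal ENNReal.ofReal_ne_top hdivne).2 hcn
    rw [ENNReal.toReal_ofReal (by linarith), ENNReal.toReal_div] at hlt
    rw [← hA, ← hM] at hlt
    exact (lt_div_iff₀ hMpos).1 hlt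
  -- contradiction
  have hku : k * (1 / (2 * k)) = 1 / 2 := by
    field_simp
  have hexp : (1 - 1 / (2 * k)) * M = M - 1 / (2 * k) * M := by ring
  rw [hexp] at hAM
  have hBlt : B < 1 / (2 * k) * M := by linarith
  have hfin : k * B < k * (1 / (2 * k) * M) := mul_lt_mul_of_pos_left hBlt hk0
  rw [← mul_assoc, hku] at hfin
  linarith


end
end

section
/- There exists an unbounded closed set A ⊆ ℝ^d such that P(A,x) = 𝒦_0^+ for all x ∈ A: at every point of A, the collection of photographs of A (limits under zooming out) is exactly the collection of compact subsets of Q containing 0 and lying in the half-space {x_1 ≥ 0}. -/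
open Metric Set Filter Topology

noncomputable section

/-- `F` is a photograph of `A` at `x`: `F ∈ 𝒦` and `T_{x,t_n}(A) → F` in the Hausdorff
distance for some sequence `t_n ↑ ∞`. -/
def IsPhotograph (d : ℕ) (A : Set (Euc d)) (x : Euc d) (F : Set (Euc d)) : Prop :=
  IsKSet d F ∧ ∃ t : ℕ → ℝ, (∀ n, 0 < t n) ∧ StrictMono t ∧ Tendsto t atTop atTop ∧
    Tendsto (fun n => hausdorffDist (zoom d x (t n) A) F) atTop (nhds 0)

/-- `P(A, x)`: the collection of all photographs of `A` at `x`. -/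
def Photographs (d : ℕ) (A : Set (Euc d)) (x : Euc d) : Set (Set (Euc d)) :=
  {F | IsPhotograph d A x F}

namespace PhotoAux

variable {d : ℕ}

lemma coord_le_norm (x : Euc d) (i : Fin d) : |x i| ≤ ‖x‖ := by
  rw [EuclideanSpace.norm_eq, ← Real.sqrt_sq_eq_abs]
  apply Real.sqrt_le_sqrt
  have : |x i| ^ 2 ≤ ∑ j, ‖x j‖ ^ 2 := by
    have := Finset.single_le_sum (f := fun j => ‖x j‖ ^ 2)
      (fun j _ => by positivity) (Finset.mem_univ i)
    simpa [Real.norm_eq_abs, sq_abs] using this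
  simpa [sq_abs] using this

lemma norm_le_sqrtd {x : Euc d} (h : ∀ i, |x i| ≤ 1) : ‖x‖ ≤ Real.sqrt d := by
  rw [EuclideanSpace.norm_eq]
  apply Real.sqrt_le_sqrt
  calc ∑ j, ‖x j‖ ^ 2 ≤ ∑ _j : Fin d, (1:ℝ) := by
        apply Finset.sum_le_sum
        intro j _
        have := h j
        have h2 : ‖x j‖ ≤ 1 := by simpa [Real.norm_eq_abs] using this
        nlinarith [norm_nonneg (x j)]
    _ = d := by simp

lemma mem_cube_iff {x : Euc d} : x ∈ cube d ↔ ∀ i, |x i| ≤ 1 := by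
  simp [cube, abs_le, Set.mem_Icc]

lemma norm_le_sqrtd_of_mem_cube {x : Euc d} (h : x ∈ cube d) : ‖x‖ ≤ Real.sqrt d :=
  norm_le_sqrtd (mem_cube_iff.1 h)

lemma zero_mem_cube : (0 : Euc d) ∈ cube d := by
  intro i; simp

lemma isBounded_cube : Bornology.IsBounded (cube d) := by
  apply (Metric.isBounded_closedBall (x := (0:Euc d)) (r := Real.sqrt d)).subset
  intro x hx
  simpa [Metric.mem_closedBall] using norm_le_sqrtd_of_mem_cube hx

lemma one_le_sqrtd (hd : 0 < d) : (1:ℝ) ≤ Real.sqrt d := by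
  rw [Real.one_le_sqrt]
  exact_mod_cast hd

/-- index `m(n)` cycling through all naturals infinitely often -/
def mfun (n : ℕ) : ℕ := n.unpair.1

lemma mfun_pair (m k : ℕ) : mfun (Nat.pair m k) = m := by
  simp [mfun, Nat.unpair_pair]

/-- Data for the construction. -/
structure Setup (d : ℕ) (hd : 0 < d) where
  F : ℕ → Finset (Euc d)
  dlt : ℕ → ℝ
  t : ℕ → ℝ
  hdlt0 : ∀ m, 0 < dlt m
  hdlt1 : ∀ m, dlt m ≤ 1
  hF0 : ∀ m, ∀ p ∈ F m, dlt m ≤ p ⟨0, hd⟩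
  hF1 : ∀ m, ∀ p ∈ F m, ∀ i, |p i| ≤ 1 - dlt m
  hne : ∃ m, (F m).Nonempty
  dense : ∀ K ∈ KColl0plus d hd, ∀ ε : ℝ, 0 < ε →
    ∃ m, hausdorffDist (insert (0:Euc d) (↑(F m) : Set (Euc d))) K ≤ ε
  htpos : ∀ n, 0 < t n
  htlin : ∀ n : ℕ, (n : ℝ) + 1 ≤ t n
  hsmall : ∀ n : ℕ, ((n:ℝ) + 4) * (Real.sqrt d * t n) ≤ t (n+1)
  hbig : ∀ n, 4 * Real.sqrt d * t n ≤ t (n+1) * dlt (mfun (n+1))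

variable {hd : 0 < d}

lemma Setup.tmono (S : Setup d hd) : StrictMono S.t := by
  apply strictMono_nat_of_lt_succ
  intro n
  have h1 := S.hsmall n
  have h2 := S.htpos n
  have h3 := one_le_sqrtd hd
  have h0 : (0:ℝ) ≤ (n:ℝ) := Nat.cast_nonneg n
  nlinarith [mul_le_mul_of_nonneg_right h3 h2.le]

/-- the union set -/
def ASet (S : Setup d hd) : Set (Euc d) :=
  insert 0 (⋃ n, (fun p => S.t n • p) '' (↑(S.F (mfun n)) : Set (Euc d)))

lemma mem_ASet {S : Setup d hd} {y : Euc d} :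
    y ∈ ASet S ↔ y = 0 ∨ ∃ n, ∃ p ∈ S.F (mfun n), y = S.t n • p := by
  simp [ASet, eq_comm]

lemma zero_mem_ASet (S : Setup d hd) : (0 : Euc d) ∈ ASet S := by
  simp [ASet]

lemma copy_mem_ASet (S : Setup d hd) {n : ℕ} {p : Euc d} (hp : p ∈ S.F (mfun n)) :
    S.t n • p ∈ ASet S := mem_ASet.2 (Or.inr ⟨n, p, hp, rfl⟩)

lemma norm_p_le {S : Setup d hd} {m : ℕ} {p : Euc d} (hp : p ∈ S.F m) :
    ‖p‖ ≤ Real.sqrt d := by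
  apply norm_le_sqrtd
  intro i
  have := S.hF1 m p hp i
  have := (S.hdlt0 m)
  linarith

lemma dlt_le_norm_p {S : Setup d hd} {m : ℕ} {p : Euc d} (hp : p ∈ S.F m) :
    S.dlt m ≤ ‖p‖ := by
  have h1 := S.hF0 m p hp
  have h2 := coord_le_norm p ⟨0, hd⟩
  have := abs_nonneg (p ⟨0, hd⟩)
  calc S.dlt m ≤ p ⟨0, hd⟩ := h1
    _ ≤ |p ⟨0, hd⟩| := le_abs_self _
    _ ≤ ‖p‖ := h2

lemma copy_norm_le {S : Setup d hd} {n : ℕ} {p : Euc d} (hp : p ∈ S.F (mfun n)) :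
    ‖S.t n • p‖ ≤ Real.sqrt d * S.t n := by
  rw [norm_smul, Real.norm_eq_abs, abs_of_pos (S.htpos n)]
  have := norm_p_le hp
  have := S.htpos n
  nlinarith

lemma le_copy_norm {S : Setup d hd} {n : ℕ} {p : Euc d} (hp : p ∈ S.F (mfun n)) :
    S.t n * S.dlt (mfun n) ≤ ‖S.t n • p‖ := by
  rw [norm_smul, Real.norm_eq_abs, abs_of_pos (S.htpos n)]
  have := dlt_le_norm_p (hd := hd) hp
  have := S.htpos n
  nlinarith

lemma nonneg_coord_ASet {S : Setup d hd} {y : Euc d} (hy : y ∈ ASet S) :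
    0 ≤ y ⟨0, hd⟩ := by
  rcases mem_ASet.1 hy with rfl | ⟨n, p, hp, rfl⟩
  · simp
  · have h1 := S.hF0 _ p hp
    have h2 := S.hdlt0 (mfun n)
    have ht := S.htpos n
    have : (S.t n • p) ⟨0, hd⟩ = S.t n * p ⟨0, hd⟩ := rfl
    rw [this]
    exact mul_nonneg ht.le (le_trans h2.le h1)

/-- points of late copies are far away -/
lemma late_copy_far {S : Setup d hd} {n j : ℕ} (hj : n + 1 ≤ j) {p : Euc d}
    (hp : p ∈ S.F (mfun j)) : 4 * Real.sqrt d * S.t n ≤ ‖S.t j • p‖ := by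
  obtain ⟨k, rfl⟩ : ∃ k, j = k + 1 := ⟨j - 1, by omega⟩
  have h1 := le_copy_norm (hd := hd) hp
  have h2 := S.hbig k
  have h3 : S.t n ≤ S.t k := by
    rcases eq_or_lt_of_le (Nat.lt_succ_iff.mp hj) with h | h
    · exact le_of_eq (by rw [h])
    · exact (S.tmono h).le
  have h4 : 0 < Real.sqrt d := lt_of_lt_of_le one_pos (one_le_sqrtd hd)
  calc 4 * Real.sqrt d * S.t n ≤ 4 * Real.sqrt d * S.t k := by nlinarith
    _ ≤ S.t (k+1) * S.dlt (mfun (k+1)) := h2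
    _ ≤ ‖S.t (k+1) • p‖ := by
        rw [mul_comm] at h1 ⊢
        exact h1

end PhotoAux

namespace PhotoAux

variable {d : ℕ} {hd : 0 < d}

lemma isClosed_of_finite_balls {E : Type*} [NormedAddCommGroup E] {A : Set E}
    (h : ∀ R : ℝ, (A ∩ Metric.closedBall 0 R).Finite) : IsClosed A := by
  rw [← closure_subset_iff_isClosed]
  intro x hx
  set B := Metric.closedBall (0:E) (‖x‖ + 1) with hB
  have hsplit : A ⊆ (A ∩ B) ∪ (A \ B) := fun y hy => by
    by_cases hyB : y ∈ B
    · exact Or.inl ⟨hy, hyB⟩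
    · exact Or.inr ⟨hy, hyB⟩
  have hx' : x ∈ closure ((A ∩ B) ∪ (A \ B)) := closure_mono hsplit hx
  rw [closure_union] at hx'
  rcases hx' with hx' | hx'
  · rw [(h (‖x‖ + 1)).isClosed.closure_eq] at hx'
    exact hx'.1
  · exfalso
    have hsub : A \ B ⊆ {y : E | ‖x‖ + 1 ≤ ‖y‖} := by
      intro y hy
      have : ¬ (‖y‖ ≤ ‖x‖ + 1) := by
        intro hle
        exact hy.2 (by simpa [hB, Metric.mem_closedBall] using hle)
      exact le_of_not_ge this
    have hcl : IsClosed {y : E | ‖x‖ + 1 ≤ ‖y‖} :=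
      isClosed_le continuous_const continuous_norm
    have := (closure_minimal hsub hcl) hx'
    simp only [Set.mem_setOf_eq] at this
    linarith

lemma ASet_inter_ball_finite (S : Setup d hd) (R : ℝ) :
    (ASet S ∩ Metric.closedBall 0 R).Finite := by
  obtain ⟨N, hN⟩ := exists_nat_ge R
  apply Set.Finite.subset (s := insert (0:Euc d)
    (⋃ n ∈ Finset.range (N+1), (fun p => S.t n • p) '' (↑(S.F (mfun n)) : Set (Euc d))))
  · apply Set.Finite.insert
    apply Set.Finite.biUnion (Finset.range (N+1)).finite_toSet
    intro n _
    exact (S.F (mfun n)).finite_toSet.image _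
  · rintro y ⟨hyA, hyB⟩
    rcases mem_ASet.1 hyA with rfl | ⟨n, p, hp, rfl⟩
    · exact Set.mem_insert _ _
    · right
      simp only [Set.mem_iUnion, Finset.mem_range]
      refine ⟨n, ?_, Set.mem_image_of_mem _ hp⟩
      by_contra hcon
      push_neg at hcon
      have hnN : N + 1 ≤ n := hcon
      have hfar := late_copy_far (hd := hd) (n := N) hnN hp
      have hnorm : ‖S.t n • p‖ ≤ R := by
        simpa [Metric.mem_closedBall] using hyB
      have h1 : 1 ≤ Real.sqrt d := one_le_sqrtd hd
      have h2 : ((N:ℝ) + 1) ≤ S.t N := S.htlin N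
      have h3 : (R:ℝ) ≤ N := hN
      nlinarith [S.htpos N]

lemma isClosed_ASet (S : Setup d hd) : IsClosed (ASet S) :=
  isClosed_of_finite_balls (ASet_inter_ball_finite S)

lemma not_bounded_ASet (S : Setup d hd) : ¬ Bornology.IsBounded (ASet S) := by
  intro hb
  obtain ⟨R, hR⟩ := hb.subset_closedBall 0
  obtain ⟨m₀, p₀, hp₀⟩ := S.hne
  obtain ⟨k, hk⟩ := exists_nat_gt (R / S.dlt m₀)
  set n := Nat.pair m₀ k with hn
  have hm : mfun n = m₀ := mfun_pair m₀ k
  have hpmem : p₀ ∈ S.F (mfun n) := by rw [hm]; exact hp₀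
  have hymem : S.t n • p₀ ∈ ASet S := copy_mem_ASet S hpmem
  have hyR : ‖S.t n • p₀‖ ≤ R := by
    have := hR hymem
    simpa [Metric.mem_closedBall] using this
  have hlow : S.t n * S.dlt (mfun n) ≤ ‖S.t n • p₀‖ := le_copy_norm hpmem
  have hkn : (k : ℝ) ≤ n := by exact_mod_cast Nat.right_le_pair m₀ k
  have htn : (n : ℝ) + 1 ≤ S.t n := S.htlin n
  have hdp : 0 < S.dlt m₀ := S.hdlt0 m₀
  rw [hm] at hlow
  have : R < k * S.dlt m₀ := by
    rw [div_lt_iff₀ hdp] at hk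
    exact hk
  nlinarith

end PhotoAux

namespace PhotoAux

variable {d : ℕ} {hd : 0 < d}

lemma zero_mem_zoom {A : Set (Euc d)} {x : Euc d} (hx : x ∈ A) {T : ℝ} :
    (0 : Euc d) ∈ zoom d x T A :=
  ⟨⟨x, hx, by simp⟩, zero_mem_cube⟩

lemma norm_inv_smul {T : ℝ} (hT : 0 < T) (v : Euc d) : ‖T⁻¹ • v‖ = T⁻¹ * ‖v‖ := by
  rw [norm_smul, Real.norm_eq_abs, abs_of_pos (inv_pos.2 hT)]

lemma dist_sub_smul {T : ℝ} (hT : 0 < T) (z x : Euc d) :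
    dist (z - T⁻¹ • x) z = T⁻¹ * ‖x‖ := by
  rw [dist_eq_norm, sub_sub_cancel_left, norm_neg, norm_inv_smul hT]

lemma coord_smul (T : ℝ) (x : Euc d) (i : Fin d) : (T • x) i = T * x i := rfl

lemma coord_sub (x y : Euc d) (i : Fin d) : (x - y) i = x i - y i := rfl

lemma zoom_subset_cube {A : Set (Euc d)} {x : Euc d} {T : ℝ} :
    zoom d x T A ⊆ cube d := Set.inter_subset_right

set_option maxHeartbeats 1000000 in
/-- The key approximation estimate. -/
lemma zoom_est (S : Setup d hd) {x : Euc d} (hx : x ∈ ASet S) (m : ℕ) {ε : ℝ}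
    (hε : 0 < ε) :
    ∃ N : ℕ, ∀ n : ℕ, N + 1 ≤ n → mfun n = m →
      hausdorffDist (zoom d x (S.t n) (ASet S))
        (insert (0:Euc d) (↑(S.F m) : Set (Euc d))) ≤ ε := by
  obtain ⟨N, hN⟩ := exists_nat_ge (2/ε + 2*‖x‖/ε + ‖x‖/S.dlt m)
  refine ⟨N, ?_⟩
  intro n hn hmn
  obtain ⟨k, rfl⟩ : ∃ k, n = k + 1 := ⟨n - 1, by omega⟩
  have hkN : (N:ℝ) ≤ k := by exact_mod_cast Nat.lt_succ_iff.mp hn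
  set T := S.t (k+1) with hT
  have hTpos : 0 < T := S.htpos (k+1)
  have hsd : (1:ℝ) ≤ Real.sqrt d := one_le_sqrtd hd
  have hdm0 : 0 < S.dlt m := S.hdlt0 m
  have hdm1 : S.dlt m ≤ 1 := S.hdlt1 m
  have hxnn : (0:ℝ) ≤ ‖x‖ := norm_nonneg x
  have hterm1 : 2/ε ≤ k := by
    have h1 : 0 ≤ 2*‖x‖/ε := by positivity
    have h2 : 0 ≤ ‖x‖/S.dlt m := by positivity
    linarith
  have hterm2 : 2*‖x‖/ε ≤ k := by
    have h1 : 0 ≤ 2/ε := by positivity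
    have h2 : 0 ≤ ‖x‖/S.dlt m := by positivity
    linarith
  have hterm3 : ‖x‖/S.dlt m ≤ k := by
    have h1 : 0 ≤ 2/ε := by positivity
    have h2 : 0 ≤ 2*‖x‖/ε := by positivity
    linarith
  have hk0 : (0:ℝ) ≤ k := le_trans (by positivity) hterm1
  have htk1 : (k:ℝ) + 2 ≤ T := by
    have := S.htlin (k+1)
    push_cast at this
    linarith
  have htkpos : 0 < S.t k := S.htpos k
  -- ‖x‖ ≤ (ε/2) * T
  have hxb : 2 * ‖x‖ ≤ ε * T := by
    rw [div_le_iff₀ hε] at hterm2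
    nlinarith
  -- √d * t k ≤ (ε/2) * T
  have hsb : 2 * (Real.sqrt d * S.t k) ≤ ε * T := by
    have hsm := S.hsmall k
    rw [div_le_iff₀ hε] at hterm1
    -- 2 ≤ ε * k, and (k+4) * (√d * t k) ≤ T
    have h4 : 0 < Real.sqrt d * S.t k := by positivity
    nlinarith
  have ha : Real.sqrt d * S.t k + ‖x‖ ≤ ε * T := by linarith
  -- ‖x‖ ≤ dlt m * T
  have hc : ‖x‖ ≤ S.dlt m * T := by
    rw [div_le_iff₀ hdm0] at hterm3
    nlinarith
  have hxT : ‖x‖ ≤ Real.sqrt d * T := by nlinarith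
  have hεT : ‖x‖ ≤ ε * T := by linarith [mul_pos hε hTpos]
  -- nonemptiness and the two inclusions
  apply hausdorffDist_le_of_mem_dist hε.le
  · -- forward: every point of the zoom is close to the model set
    rintro w ⟨⟨y, hyA, rfl⟩, hwQ⟩
    dsimp only at hwQ ⊢
    rcases mem_ASet.1 hyA with rfl | ⟨j, p, hp, rfl⟩
    · refine ⟨0, Set.mem_insert _ _, ?_⟩
      have heq : dist (T⁻¹ • ((0:Euc d) - x)) (0:Euc d) = T⁻¹ * ‖x‖ := by
        rw [dist_zero_right, zero_sub, norm_inv_smul hTpos, norm_neg]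
      rw [heq, inv_mul_le_iff₀ hTpos]
      linarith [mul_pos hε hTpos]
    · rcases lt_trichotomy j (k+1) with hj | hj | hj
      · -- old copies: close to 0
        refine ⟨0, Set.mem_insert _ _, ?_⟩
        have hyn : ‖S.t j • p‖ ≤ Real.sqrt d * S.t k := by
          have h1 := copy_norm_le (hd := hd) hp
          have h2 : S.t j ≤ S.t k := S.tmono.monotone (Nat.lt_succ_iff.mp hj)
          have h3 : 0 < Real.sqrt d := by linarith
          nlinarith [S.htpos j]
        have hdd : dist (T⁻¹ • (S.t j • p - x)) (0:Euc d) = T⁻¹ * ‖S.t j • p - x‖ := by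
          rw [dist_zero_right, norm_inv_smul hTpos]
        rw [hdd, inv_mul_le_iff₀ hTpos]
        have : ‖S.t j • p - x‖ ≤ ‖S.t j • p‖ + ‖x‖ := norm_sub_le _ _
        linarith
      · -- the current copy
        subst hj
        rw [hmn] at hp
        refine ⟨p, Set.mem_insert_of_mem _ hp, ?_⟩
        have hw : T⁻¹ • (T • p - x) = p - T⁻¹ • x := by
          rw [smul_sub, inv_smul_smul₀ (ne_of_gt hTpos)]
        rw [show S.t (k+1) • p = T • p from rfl, hw, dist_sub_smul hTpos,
          inv_mul_le_iff₀ hTpos]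
        linarith
      · -- later copies: impossible
        exfalso
        have hfar : 4 * Real.sqrt d * T ≤ ‖S.t j • p‖ := late_copy_far (hd := hd) hj hp
        have hwn : ‖T⁻¹ • (S.t j • p - x)‖ ≤ Real.sqrt d :=
          norm_le_sqrtd_of_mem_cube hwQ
        have h1 : ‖S.t j • p‖ - ‖x‖ ≤ ‖S.t j • p - x‖ := by
          have := norm_sub_norm_le (S.t j • p) x
          linarith [abs_le.1 (abs_norm_sub_norm_le (S.t j • p) x)]
        rw [norm_inv_smul hTpos] at hwn
        have h3 : ‖S.t j • p - x‖ ≤ Real.sqrt d * T := by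
          rw [inv_mul_le_iff₀ hTpos] at hwn
          linarith [hwn]
        nlinarith
  · -- backward: every point of the model set is close to the zoom
    intro z hz
    rcases Set.mem_insert_iff.1 hz with rfl | hz
    · exact ⟨0, zero_mem_zoom hx, by simp [hε.le]⟩
    · -- z = p ∈ F m
      have hp : z ∈ S.F (mfun (k+1)) := by rw [hmn]; exact hz
      refine ⟨z - T⁻¹ • x, ⟨⟨T • z, copy_mem_ASet S hp, ?_⟩, ?_⟩, ?_⟩
      · show T⁻¹ • (T • z - x) = z - T⁻¹ • x
        rw [smul_sub, inv_smul_smul₀ (ne_of_gt hTpos)]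
      · -- membership in the cube
        rw [mem_cube_iff]
        intro i
        have h1 : |z i| ≤ 1 - S.dlt m := S.hF1 m z hz i
        have h2 : |(T⁻¹ • x) i| ≤ T⁻¹ * ‖x‖ := by
          rw [coord_smul, abs_mul, abs_of_pos (inv_pos.2 hTpos)]
          have := coord_le_norm x i
          nlinarith [inv_pos.2 hTpos]
        have h3 : T⁻¹ * ‖x‖ ≤ S.dlt m := by
          rw [inv_mul_le_iff₀ hTpos]
          linarith [hc]
        calc |(z - T⁻¹ • x) i| = |z i - (T⁻¹ • x) i| := by rw [coord_sub]
          _ ≤ |z i| + |(T⁻¹ • x) i| := abs_sub _ _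
          _ ≤ 1 := by linarith
      · rw [dist_comm, dist_sub_smul hTpos, inv_mul_le_iff₀ hTpos]
        linarith

end PhotoAux

namespace PhotoAux

variable {d : ℕ} {hd : 0 < d}

lemma photographs_subset (S : Setup d hd) {x : Euc d} (hx : x ∈ ASet S) {F : Set (Euc d)}
    (hF : IsPhotograph d (ASet S) x F) : F ∈ KColl0plus d hd := by
  obtain ⟨hK, t', hpos, hmono, htop, hconv⟩ := hF
  obtain ⟨hFne, hFcpt, hFsub⟩ := hK
  have hfin : ∀ n, EMetric.hausdorffEdist (zoom d x (t' n) (ASet S)) F ≠ ⊤ := fun n =>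
    hausdorffEdist_ne_top_of_nonempty_of_bounded ⟨0, zero_mem_zoom hx⟩ hFne
      (isBounded_cube.subset zoom_subset_cube) hFcpt.isBounded
  have h0F : (0 : Euc d) ∈ F := by
    have h0 : ∀ n, infDist (0 : Euc d) F ≤ hausdorffDist (zoom d x (t' n) (ASet S)) F :=
      fun n => infDist_le_hausdorffDist_of_mem (zero_mem_zoom hx) (hfin n)
    have hle : infDist (0 : Euc d) F ≤ 0 := ge_of_tendsto hconv (Eventually.of_forall h0)
    exact (hFcpt.isClosed.mem_iff_infDist_zero hFne).2 (le_antisymm hle infDist_nonneg)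
  refine ⟨⟨hFne, hFcpt, hFsub⟩, h0F, ?_⟩
  intro z hz
  apply le_of_forall_pos_le_add
  intro ε hε
  have hev1 : ∀ᶠ n in atTop, hausdorffDist (zoom d x (t' n) (ASet S)) F < ε/2 :=
    hconv.eventually (gt_mem_nhds (half_pos hε))
  have hev2 : ∀ᶠ n in atTop, 2*(x ⟨0, hd⟩ + 1)/ε ≤ t' n :=
    htop.eventually_ge_atTop _
  obtain ⟨n, hlt, hti⟩ := (hev1.and hev2).exists
  obtain ⟨w, hw, hdzw⟩ := exists_dist_lt_of_hausdorffDist_lt' hz hlt (hfin n)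
  rcases hw with ⟨⟨y, hyA, rfl⟩, hwQ⟩
  set T := t' n with hTdef
  have hTpos : 0 < T := hpos n
  have hy0 : 0 ≤ y ⟨0, hd⟩ := nonneg_coord_ASet hyA
  have hx0 : 0 ≤ x ⟨0, hd⟩ := nonneg_coord_ASet hx
  -- the first coordinate of the zoomed point
  have hw0 : (T⁻¹ • (y - x)) ⟨0, hd⟩ = T⁻¹ * (y ⟨0, hd⟩ - x ⟨0, hd⟩) := by
    rw [coord_smul, coord_sub]
  have hwlow : -(ε/2) ≤ (T⁻¹ • (y - x)) ⟨0, hd⟩ := by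
    rw [hw0]
    have h1 : T⁻¹ * (y ⟨0, hd⟩ - x ⟨0, hd⟩) ≥ -(T⁻¹ * x ⟨0, hd⟩) := by
      have := mul_le_mul_of_nonneg_left (neg_le_sub_iff_le_add.2 (by linarith : y ⟨0,hd⟩ - x ⟨0,hd⟩ ≥ -(x ⟨0,hd⟩)).le) (inv_pos.2 hTpos).le
      nlinarith [inv_pos.2 hTpos]
    have h2 : T⁻¹ * x ⟨0, hd⟩ ≤ ε/2 := by
      rw [inv_mul_le_iff₀ hTpos]
      rw [div_le_iff₀ hε] at hti
      nlinarith
    linarith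
  have hcoord : |(T⁻¹ • (y - x)) ⟨0, hd⟩ - z ⟨0, hd⟩| ≤ dist (T⁻¹ • (y - x)) z := by
    have := coord_le_norm (T⁻¹ • (y - x) - z) ⟨0, hd⟩
    rw [coord_sub] at this
    rw [dist_eq_norm]
    exact this
  have := abs_le.1 hcoord
  dsimp only at hdzw hwlow hcoord this ⊢
  linarith [this.1, this.2]

/-- iterate a choice function -/
def chooseSeq (f : ℕ → ℕ → ℕ) : ℕ → ℕ
  | 0 => f 0 0
  | (j+1) => f (j+1) (chooseSeq f j)

lemma subset_photographs (S : Setup d hd) {x : Euc d} (hx : x ∈ ASet S) {K : Set (Euc d)}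
    (hK : K ∈ KColl0plus d hd) : IsPhotograph d (ASet S) x K := by
  obtain ⟨⟨hKne, hKcpt, hKsub⟩, h0K, hKhalf⟩ := hK
  have key : ∀ j prev : ℕ, ∃ n : ℕ, prev < n ∧
      hausdorffDist (zoom d x (S.t n) (ASet S)) K ≤ 2/((j:ℝ)+1) := by
    intro j prev
    obtain ⟨m, hm⟩ := S.dense K ⟨⟨hKne, hKcpt, hKsub⟩, h0K, hKhalf⟩ (1/((j:ℝ)+1))
      (by positivity)
    obtain ⟨N, hN⟩ := zoom_est S hx m (show (0:ℝ) < 1/((j:ℝ)+1) by positivity)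
    refine ⟨Nat.pair m (N + prev + 2), ?_, ?_⟩
    · have := Nat.right_le_pair m (N + prev + 2); omega
    · have h1 : N + 1 ≤ Nat.pair m (N + prev + 2) := by
        have := Nat.right_le_pair m (N + prev + 2); omega
      have hz := hN _ h1 (mfun_pair m _)
      have hfin : EMetric.hausdorffEdist (zoom d x (S.t (Nat.pair m (N + prev + 2))) (ASet S))
          (insert (0:Euc d) (↑(S.F m) : Set (Euc d))) ≠ ⊤ := by
        apply hausdorffEdist_ne_top_of_nonempty_of_bounded
          ⟨0, zero_mem_zoom hx⟩ ⟨0, Set.mem_insert _ _⟩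
          (isBounded_cube.subset zoom_subset_cube)
        exact ((S.F m).finite_toSet.insert 0).isBounded
      calc hausdorffDist (zoom d x (S.t (Nat.pair m (N + prev + 2))) (ASet S)) K
          ≤ hausdorffDist (zoom d x (S.t (Nat.pair m (N + prev + 2))) (ASet S))
              (insert (0:Euc d) (↑(S.F m) : Set (Euc d)))
            + hausdorffDist (insert (0:Euc d) (↑(S.F m) : Set (Euc d))) K :=
            hausdorffDist_triangle hfin
        _ ≤ 1/((j:ℝ)+1) + 1/((j:ℝ)+1) := add_le_add hz hm
        _ = 2/((j:ℝ)+1) := by ring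
  -- build the sequence of indices
  choose! f hf1 hf2 using key
  set nseq : ℕ → ℕ := chooseSeq f with hnseq
  have e0 : nseq 0 = f 0 0 := rfl
  have eS : ∀ j : ℕ, nseq (j+1) = f (j+1) (nseq j) := fun j => rfl
  have hnmono : StrictMono nseq := by
    apply strictMono_nat_of_lt_succ
    intro j
    rw [eS j]
    exact hf1 (j+1) (nseq j)
  have hbound : ∀ j : ℕ, hausdorffDist (zoom d x (S.t (nseq j)) (ASet S)) K ≤ 2/((j:ℝ)+1) := by
    intro j
    cases j with
    | zero => rw [e0]; exact_mod_cast hf2 0 0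
    | succ j =>
        rw [eS j]
        have := hf2 (j+1) (nseq j)
        push_cast at this ⊢
        linarith
  have hmain : Tendsto (fun j : ℕ => (j:ℝ)) atTop atTop := tendsto_natCast_atTop_atTop
  have hmono' : ∀ j : ℕ, (fun j : ℕ => (j:ℝ)) j ≤ (fun j : ℕ => S.t (nseq j)) j := by
    intro j
    have h1 : ((j:ℕ):ℝ) ≤ ((nseq j : ℕ):ℝ) := Nat.cast_le.mpr hnmono.le_apply
    have h2 := S.htlin (nseq j)
    simp only []
    linarith
  have htend : Tendsto (fun j : ℕ => S.t (nseq j)) atTop atTop :=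
    tendsto_atTop_mono hmono' hmain
  refine ⟨⟨hKne, hKcpt, hKsub⟩, fun j => S.t (nseq j), fun j => S.htpos _,
    S.tmono.comp hnmono, htend, ?_⟩
  · apply squeeze_zero (fun j => hausdorffDist_nonneg) hbound
    have h : Tendsto (fun n : ℕ => 1 / ((n : ℝ) + 1)) atTop (𝓝 0) :=
      tendsto_one_div_add_atTop_nhds_zero_nat
    have h2 := h.const_mul (2:ℝ)
    simp only [mul_zero] at h2
    convert h2 using 2 with j
    rw [mul_one_div]

end PhotoAux

namespace PhotoAux

variable {d : ℕ}

lemma coord_add (x y : Euc d) (i : Fin d) : (x + y) i = x i + y i := rfl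

/-- the open "good" region -/
def good (d : ℕ) (hd : 0 < d) : Set (Euc d) :=
  {p | 0 < p ⟨0, hd⟩ ∧ ∀ i, |p i| < 1}

lemma center_spec (hd : 0 < d) :
    ∃ c : Euc d, c ⟨0, hd⟩ = 1/2 ∧ ∀ i, |c i| ≤ 1/2 := by
  refine ⟨EuclideanSpace.single ⟨0, hd⟩ (1/2 : ℝ), ?_, ?_⟩
  · rw [EuclideanSpace.single_apply]; simp
  · intro i
    rw [EuclideanSpace.single_apply]
    split <;> norm_num [abs_le]

lemma good_approx (hd : 0 < d) {y : Euc d} (hy0 : 0 ≤ y ⟨0, hd⟩)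
    (hy1 : ∀ i, |y i| ≤ 1) {r : ℝ} (hr : 0 < r) :
    ∃ p ∈ good d hd, dist y p < r := by
  obtain ⟨c, hc0, hc1⟩ := center_spec hd
  set n := ‖c - y‖ with hn
  have hnn : 0 ≤ n := norm_nonneg _
  set s := min (1:ℝ) (r/(n+1)) with hs
  have hs0 : 0 < s := lt_min one_pos (by positivity)
  have hs1 : s ≤ 1 := min_le_left _ _
  have hs2 : s ≤ r/(n+1) := min_le_right _ _
  refine ⟨y + s • (c - y), ⟨?_, ?_⟩, ?_⟩
  · -- positive first coordinate
    have : (y + s • (c - y)) ⟨0, hd⟩ = y ⟨0, hd⟩ + s * (c ⟨0, hd⟩ - y ⟨0, hd⟩) := by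
      rw [coord_add, coord_smul, coord_sub]
    rw [this, hc0]
    nlinarith
  · -- coordinates strictly inside
    intro i
    have he : (y + s • (c - y)) i = (1 - s) * y i + s * c i := by
      rw [coord_add, coord_smul, coord_sub]; ring
    rw [he]
    have h1 : |(1 - s) * y i + s * c i| ≤ (1-s) * |y i| + s * |c i| := by
      calc |(1 - s) * y i + s * c i| ≤ |(1-s) * y i| + |s * c i| := abs_add_le _ _
        _ = (1-s) * |y i| + s * |c i| := by
            rw [abs_mul, abs_mul, abs_of_nonneg (by linarith : (0:ℝ) ≤ 1 - s),
              abs_of_pos hs0]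
    have h2 := hy1 i
    have h3 := hc1 i
    nlinarith
  · -- distance
    have : dist y (y + s • (c - y)) = s * n := by
      rw [dist_eq_norm]
      have : y - (y + s • (c - y)) = -(s • (c - y)) := by abel
      rw [this, norm_neg, norm_smul, Real.norm_eq_abs, abs_of_pos hs0]
    rw [this]
    have : s * n ≤ r/(n+1) * n := by nlinarith
    have h2 : r/(n+1) * n < r := by
      rw [div_mul_eq_mul_div, div_lt_iff₀ (by linarith : (0:ℝ) < n+1)]
      nlinarith
    linarith

/-- a countable dense subset of the good region -/
lemma exists_D (hd : 0 < d) :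
    ∃ D : Set (Euc d), D.Countable ∧ D ⊆ good d hd ∧ D.Nonempty ∧
      ∀ y : Euc d, 0 ≤ y ⟨0, hd⟩ → (∀ i, |y i| ≤ 1) →
        ∀ r : ℝ, 0 < r → ∃ p ∈ D, dist y p < r := by
  obtain ⟨u, hu_cnt, hu_dense⟩ := TopologicalSpace.exists_countable_dense ↥(good d hd)
  obtain ⟨c0, hc00, hc01⟩ := center_spec hd
  have hc0good : c0 ∈ good d hd := by
    constructor
    · rw [hc00]; norm_num
    · intro i; have := hc01 i; linarith
  refine ⟨insert c0 (Subtype.val '' u), (hu_cnt.image _).insert c0, ?_, ⟨c0, Set.mem_insert _ _⟩, ?_⟩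
  · rintro p (rfl | ⟨q, hq, rfl⟩)
    · exact hc0good
    · exact q.2
  · intro y hy0 hy1 r hr
    obtain ⟨p, hp, hpy⟩ := good_approx hd hy0 hy1 (half_pos hr)
    obtain ⟨q, hq, hql⟩ := hu_dense.exists_dist_lt (⟨p, hp⟩ : ↥(good d hd)) (half_pos hr)
    refine ⟨q.val, Set.mem_insert_of_mem _ ⟨q, hq, rfl⟩, ?_⟩
    have : dist (⟨p, hp⟩ : ↥(good d hd)) q = dist p q.val := Subtype.dist_eq _ _
    rw [this] at hql
    calc dist y q.val ≤ dist y p + dist p q.val := dist_triangle _ _ _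
      _ < r/2 + r/2 := add_lt_add hpy hql
      _ = r := by ring

/-- enumeration of the finite subsets of a countable set -/
lemma exists_F {D : Set (Euc d)} (hD : D.Countable) (hDne : D.Nonempty) :
    ∃ F : ℕ → Finset (Euc d), (∀ m, (↑(F m) : Set (Euc d)) ⊆ D) ∧
      ∀ G : Finset (Euc d), (↑G : Set (Euc d)) ⊆ D → ∃ m, F m = G := by
  classical
  obtain ⟨f, hf⟩ := Set.Countable.exists_eq_range hD hDne
  obtain ⟨e, he⟩ := exists_surjective_nat (Finset ℕ)
  refine ⟨fun m => (e m).image f, ?_, ?_⟩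
  · intro m p hp
    simp only [Finset.coe_image, Set.mem_image, Finset.mem_coe] at hp
    obtain ⟨k, _, rfl⟩ := hp
    rw [hf]
    exact Set.mem_range_self k
  · intro G hG
    have hmem : ∀ g ∈ G, ∃ k : ℕ, f k = g := by
      intro g hg
      have : g ∈ Set.range f := by rw [← hf]; exact hG hg
      exact this
    choose! kf hkf using hmem
    obtain ⟨m, hm⟩ := he (G.image kf)
    refine ⟨m, ?_⟩
    show (e m).image f = G
    rw [hm]
    apply Finset.Subset.antisymm
    · intro b hb
      simp only [Finset.mem_image] at hb
      obtain ⟨a, ha, rfl⟩ := hb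
      obtain ⟨g, hg, rfl⟩ := ha
      rw [hkf g hg]
      exact hg
    · intro g hg
      have h1 : kf g ∈ G.image kf := Finset.mem_image_of_mem kf hg
      have h2 : f (kf g) ∈ (G.image kf).image f := Finset.mem_image_of_mem f h1
      rwa [hkf g hg] at h2

/-- a uniform margin for a finite subset of the good region -/
lemma exists_delta (hd : 0 < d) (G : Finset (Euc d)) (hG : (↑G : Set (Euc d)) ⊆ good d hd) :
    ∃ δ : ℝ, 0 < δ ∧ δ ≤ 1 ∧ ∀ p ∈ G, δ ≤ p ⟨0, hd⟩ ∧ ∀ i, |p i| ≤ 1 - δ := by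
  classical
  induction G using Finset.induction_on with
  | empty => exact ⟨1, one_pos, le_refl 1, by simp⟩
  | @insert a G ha ih =>
      have hsub : (↑G : Set (Euc d)) ⊆ good d hd := by
        intro p hp; exact hG (by simp [hp])
      obtain ⟨δ, hδ0, hδ1, hδ⟩ := ih hsub
      have hagood : a ∈ good d hd := hG (by simp)
      have hne : (Finset.univ : Finset (Fin d)).Nonempty := ⟨⟨0, hd⟩, Finset.mem_univ _⟩
      set δa : ℝ := min (a ⟨0, hd⟩) (Finset.univ.inf' hne (fun i => 1 - |a i|)) with hδa
      have hδa0 : 0 < δa := by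
        apply lt_min hagood.1
        rw [Finset.lt_inf'_iff]
        intro i _
        have := hagood.2 i
        linarith
      refine ⟨min δ δa, lt_min hδ0 hδa0, le_trans (min_le_left _ _) hδ1, ?_⟩
      intro p hp
      rcases Finset.mem_insert.1 hp with rfl | hp
      · constructor
        · exact le_trans (min_le_right _ _) (le_trans (min_le_left _ _) (le_refl _))
        · intro i
          have h1 : min δ δa ≤ Finset.univ.inf' hne (fun i => 1 - |p i|) :=
            le_trans (min_le_right _ _) (min_le_right _ _)
          have h2 : Finset.univ.inf' hne (fun i => 1 - |p i|) ≤ 1 - |p i| :=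
            Finset.inf'_le _ (Finset.mem_univ i)
          linarith
      · obtain ⟨h1, h2⟩ := hδ p hp
        exact ⟨le_trans (min_le_left _ _) h1, fun i => by
          have := h2 i
          have := min_le_left δ δa
          linarith⟩

/-- the scale sequence -/
def tscale (d : ℕ) (c : ℕ → ℝ) : ℕ → ℝ
  | 0 => 1
  | (n+1) => ((n:ℝ) + 4) * Real.sqrt d * tscale d c n / c (n+1)

section tscale

variable (hd : 0 < d) {c : ℕ → ℝ} (hc0 : ∀ n, 0 < c n) (hc1 : ∀ n, c n ≤ 1)

include hd hc0 in
lemma tscale_pos : ∀ n, 0 < tscale d c n := by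
  intro n
  induction n with
  | zero => norm_num [tscale]
  | succ n ih =>
      rw [tscale]
      have h1 : (0:ℝ) < Real.sqrt d := Real.sqrt_pos.2 (by exact_mod_cast hd)
      have h2 := hc0 (n+1)
      have h3 : (0:ℝ) ≤ (n:ℝ) := Nat.cast_nonneg n
      positivity

include hd hc0 hc1 in
lemma tscale_small : ∀ n : ℕ, ((n:ℝ) + 4) * (Real.sqrt d * tscale d c n) ≤ tscale d c (n+1) := by
  intro n
  rw [tscale, le_div_iff₀ (hc0 (n+1))]
  have h1 : (0:ℝ) < Real.sqrt d := Real.sqrt_pos.2 (by exact_mod_cast hd)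
  have h2 := tscale_pos hd hc0 (c := c) n
  have h3 := hc1 (n+1)
  have h4 := (hc0 (n+1)).le
  have h5 : (0:ℝ) ≤ (n:ℝ) := Nat.cast_nonneg n
  have hpos : (0:ℝ) ≤ ((n:ℝ) + 4) * √(d:ℝ) * tscale d c n := by positivity
  nlinarith [mul_le_of_le_one_right hpos h3]

include hd hc0 hc1 in
lemma tscale_lin : ∀ n : ℕ, (n:ℝ) + 1 ≤ tscale d c n := by
  intro n
  induction n with
  | zero => norm_num [tscale]
  | succ n ih =>
      have h := tscale_small hd hc0 hc1 n
      have h1 : (1:ℝ) ≤ Real.sqrt d := by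
        rw [Real.one_le_sqrt]; exact_mod_cast hd
      have h2 := tscale_pos hd hc0 (c := c) n
      have h5 : (0:ℝ) ≤ (n:ℝ) := Nat.cast_nonneg n
      have hs : tscale d c n ≤ Real.sqrt d * tscale d c n := by nlinarith
      have hmul : ((n:ℝ) + 4) * tscale d c n ≤ ((n:ℝ) + 4) * (Real.sqrt d * tscale d c n) :=
        mul_le_mul_of_nonneg_left hs (by linarith)
      have hmul2 : ((n:ℝ) + 4) * ((n:ℝ) + 1) ≤ ((n:ℝ) + 4) * tscale d c n :=
        mul_le_mul_of_nonneg_left ih (by linarith)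
      push_cast
      nlinarith

include hd hc0 in
lemma tscale_big : ∀ n : ℕ, 4 * Real.sqrt d * tscale d c n ≤ tscale d c (n+1) * c (n+1) := by
  intro n
  have he : tscale d c (n+1) * c (n+1) = ((n:ℝ) + 4) * Real.sqrt d * tscale d c n := by
    rw [tscale, div_mul_cancel₀]
    exact ne_of_gt (hc0 (n+1))
  rw [he]
  have h1 : (0:ℝ) < Real.sqrt d := Real.sqrt_pos.2 (by exact_mod_cast hd)
  have h2 := tscale_pos hd hc0 (c := c) n
  have h5 : (0:ℝ) ≤ (n:ℝ) := Nat.cast_nonneg n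
  nlinarith [mul_nonneg (mul_nonneg h5 h1.le) h2.le]

end tscale

/-- existence of the data for the construction -/
lemma exists_setup (d : ℕ) (hd : 0 < d) : Nonempty (Setup d hd) := by
  classical
  obtain ⟨D, hDcnt, hDgood, hDne, hDdense⟩ := exists_D hd
  obtain ⟨F, hFsub, hFsurj⟩ := exists_F hDcnt hDne
  have hFgood : ∀ m, (↑(F m) : Set (Euc d)) ⊆ good d hd := fun m => (hFsub m).trans hDgood
  choose dlt hdlt0 hdlt1 hdlt using fun m => exists_delta hd (F m) (hFgood m)
  refine ⟨⟨F, dlt, tscale d (fun n => dlt (mfun n)), hdlt0, hdlt1,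
    fun m p hp => (hdlt m p hp).1, fun m p hp => (hdlt m p hp).2, ?_, ?_,
    tscale_pos hd (fun n => hdlt0 (mfun n)),
    tscale_lin hd (fun n => hdlt0 (mfun n)) (fun n => hdlt1 (mfun n)),
    tscale_small hd (fun n => hdlt0 (mfun n)) (fun n => hdlt1 (mfun n)),
    tscale_big hd (fun n => hdlt0 (mfun n))⟩⟩
  · -- some F m is nonempty
    obtain ⟨p0, hp0⟩ := hDne
    obtain ⟨m, hm⟩ := hFsurj {p0} (by simpa using hp0)
    exact ⟨m, by rw [hm]; exact ⟨p0, Finset.mem_singleton_self p0⟩⟩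
  · -- density
    rintro K ⟨⟨hKne, hKcpt, hKsub⟩, h0K, hKhalf⟩ ε hε
    obtain ⟨tset, htsub, htfin, hcov⟩ := hKcpt.finite_cover_balls (show (0:ℝ) < ε/3 by linarith)
    have hch : ∀ y ∈ tset, ∃ p ∈ D, dist y p < ε/3 := by
      intro y hy
      exact hDdense y (hKhalf y (htsub hy)) (mem_cube_iff.1 (hKsub (htsub hy))) _
        (by linarith)
    choose! pf hpfD hpf using hch
    set G : Finset (Euc d) := htfin.toFinset.image pf with hG
    have hGsub : (↑G : Set (Euc d)) ⊆ D := by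
      intro q hq
      simp only [hG, Finset.coe_image, Set.mem_image, Set.Finite.coe_toFinset] at hq
      obtain ⟨y, hy, rfl⟩ := hq
      exact hpfD y hy
    obtain ⟨m, hm⟩ := hFsurj G hGsub
    refine ⟨m, ?_⟩
    rw [hm]
    apply hausdorffDist_le_of_mem_dist (le_of_lt hε)
    · intro z hz
      rcases Set.mem_insert_iff.1 hz with rfl | hz
      · exact ⟨0, h0K, by simp [hε.le]⟩
      · simp only [hG, Finset.coe_image, Set.mem_image, Set.Finite.coe_toFinset,
          Finset.mem_coe] at hz
        obtain ⟨y, hy, rfl⟩ := hz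
        refine ⟨y, htsub hy, ?_⟩
        rw [dist_comm]
        exact le_of_lt (lt_of_lt_of_le (hpf y hy) (by linarith))
    · intro w hw
      have := hcov hw
      simp only [Set.mem_iUnion, Metric.mem_ball] at this
      obtain ⟨y, hy, hwy⟩ := this
      refine ⟨pf y, Set.mem_insert_of_mem _ ?_, ?_⟩
      · simp only [hG, Finset.coe_image, Set.mem_image, Set.Finite.coe_toFinset,
          Finset.mem_coe]
        exact ⟨y, hy, rfl⟩
      · calc dist w (pf y) ≤ dist w y + dist y (pf y) := dist_triangle _ _ _
          _ ≤ ε/3 + ε/3 := add_le_add (le_of_lt hwy) (le_of_lt (hpf y hy))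
          _ ≤ ε := by linarith

end PhotoAux

/-- There exists an unbounded closed set `A ⊆ ℝ^d` with `P(A,x) = 𝒦₀⁺` at every
`x ∈ A`. -/
theorem exists_photographs_eq_KColl0plus (d : ℕ) (hd : 0 < d) :
    ∃ A : Set (Euc d), IsClosed A ∧ ¬ Bornology.IsBounded A ∧ A.Nonempty ∧
      ∀ x ∈ A, Photographs d A x = KColl0plus d hd := by
  obtain ⟨S⟩ := PhotoAux.exists_setup d hd
  refine ⟨PhotoAux.ASet S, PhotoAux.isClosed_ASet S, PhotoAux.not_bounded_ASet S,
    ⟨0, PhotoAux.zero_mem_ASet S⟩, ?_⟩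
  intro x hx
  ext F
  constructor
  · intro hF
    exact PhotoAux.photographs_subset S hx hF
  · intro hF
    exact PhotoAux.subset_photographs S hx hF

end
end

section
/- There exists a closed set E ⊆ ℝ^d that is simultaneously globally rich and locally rich: P(E,x) ≈ 𝒦 and Tan(E,x) ≈ 𝒦 for every x ∈ E. -/
open Metric Set Filter Topology

noncomputable section

namespace Rich
variable (d : ℕ)

lemma coord_le_dist (p q : Euc d) (i : Fin d) : |p i - q i| ≤ dist p q := by
  rw [EuclideanSpace.dist_eq]
  have h1 : |p i - q i| = Real.sqrt (dist (p i) (q i) ^ 2) := by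
    rw [Real.sqrt_sq_eq_abs, Real.dist_eq, abs_abs]
  rw [h1]
  apply Real.sqrt_le_sqrt
  exact Finset.single_le_sum (f := fun j => dist (p j) (q j) ^ 2)
    (fun j _ => sq_nonneg _) (Finset.mem_univ i)

lemma dist_le_of_coords (p q : Euc d) (ε : ℝ) (hε : 0 ≤ ε)
    (h : ∀ i, |p i - q i| ≤ ε) : dist p q ≤ d * ε := by
  rw [EuclideanSpace.dist_eq]
  have h2 : ∑ i : Fin d, dist (p i) (q i) ^ 2 ≤ (d : ℝ) * ε ^ 2 := by
    calc ∑ i : Fin d, dist (p i) (q i) ^ 2 ≤ ∑ _i : Fin d, ε ^ 2 := by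
          apply Finset.sum_le_sum
          intro i _
          have hi := h i
          rw [Real.dist_eq]
          exact pow_le_pow_left₀ (abs_nonneg _) hi 2
        _ = (d : ℝ) * ε ^ 2 := by simp [mul_comm]
  have hd2 : (d:ℝ) * ε ^ 2 ≤ ((d:ℝ) * ε)^2 := by
    rcases Nat.eq_zero_or_pos d with h0 | h0
    · simp [h0]
    · have h1 : (1:ℝ) ≤ (d:ℝ) := by exact_mod_cast h0
      nlinarith [sq_nonneg ε]
  calc Real.sqrt (∑ i : Fin d, dist (p i) (q i) ^ 2) ≤ Real.sqrt (((d:ℝ) * ε)^2) :=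
        Real.sqrt_le_sqrt (h2.trans hd2)
    _ = (d:ℝ) * ε := Real.sqrt_sq (by positivity)

lemma mem_cube_iff (x : Euc d) : x ∈ cube d ↔ ∀ i, |x i| ≤ 1 := by
  simp only [cube, Set.mem_setOf_eq, Set.mem_Icc, abs_le]

lemma cube_bounded : Bornology.IsBounded (cube d) := by
  apply Bornology.IsBounded.subset (Metric.isBounded_closedBall (x := (0 : Euc d)) (r := d * 1))
  intro x hx
  rw [Metric.mem_closedBall]
  have h0 : ∀ i, |x i - (0:Euc d) i| ≤ 1 := by
    intro i
    have := (mem_cube_iff d x).1 hx i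
    simpa using this
  exact dist_le_of_coords d x 0 1 (by norm_num) h0

/-- Index type for grid patterns: a grid resolution `k` and a nonempty set of grid
vertices `v : Fin d → ℕ` with `v i ≤ k+1`. -/
def J : Type := {p : ℕ × Finset (Fin d → ℕ) // p.2.Nonempty ∧ ∀ v ∈ p.2, ∀ i, v i ≤ p.1 + 1}

instance : Countable (J d) := by unfold J; infer_instance

instance : Nonempty (J d) := ⟨⟨(0, {fun _ => 0}), by simp, by intro v hv i; simp at hv; simp [hv]⟩⟩

/-- grid point -/
def gpt (k : ℕ) (v : Fin d → ℕ) : Euc d := WithLp.toLp 2 (fun i => -1 + 2*(v i : ℝ)/(k+1))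

lemma gpt_apply (k : ℕ) (v : Fin d → ℕ) (i : Fin d) : gpt d k v i = -1 + 2*(v i : ℝ)/(k+1) := rfl

def patSet (j : J d) : Set (Euc d) := gpt d j.1.1 '' (j.1.2 : Set (Fin d → ℕ))

lemma patSet_finite (j : J d) : (patSet d j).Finite := (j.1.2.finite_toSet).image _

lemma patSet_nonempty (j : J d) : (patSet d j).Nonempty := by
  obtain ⟨v, hv⟩ := j.2.1
  exact ⟨gpt d j.1.1 v, Set.mem_image_of_mem _ hv⟩

lemma patSet_subset_cube (j : J d) : patSet d j ⊆ cube d := by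
  rintro s ⟨v, hv, rfl⟩
  rw [mem_cube_iff]
  intro i
  rw [gpt_apply, abs_le]
  have h1 : (0:ℝ) ≤ (v i : ℝ) := by positivity
  have h2 : (v i : ℝ) ≤ (j.1.1 : ℝ) + 1 := by exact_mod_cast j.2.2 v hv i
  have hk : (0:ℝ) < (j.1.1 : ℝ) + 1 := by positivity
  constructor
  · have : (0:ℝ) ≤ 2*(v i : ℝ)/(j.1.1+1) := by positivity
    linarith
  · have : 2*(v i : ℝ)/(j.1.1+1) ≤ 2 := by
      rw [div_le_iff₀ hk]; linarith
    linarith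

lemma patSet_sep (j : J d) {s t : Euc d} (hs : s ∈ patSet d j) (ht : t ∈ patSet d j)
    (hst : s ≠ t) : ∃ i, 2/((j.1.1:ℝ)+1) ≤ |s i - t i| := by
  obtain ⟨v, hv, rfl⟩ := hs
  obtain ⟨w, hw, rfl⟩ := ht
  have hvw : v ≠ w := by rintro rfl; exact hst rfl
  obtain ⟨i, hi⟩ := Function.ne_iff.1 hvw
  refine ⟨i, ?_⟩
  rw [gpt_apply, gpt_apply]
  have hk : (0:ℝ) < (j.1.1 : ℝ) + 1 := by positivity
  have h1 : |(v i : ℝ) - (w i : ℝ)| ≥ 1 := by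
    have : ((v i : ℤ)) ≠ ((w i : ℤ)) := by exact_mod_cast hi
    have h2 : (1:ℤ) ≤ |(v i : ℤ) - (w i : ℤ)| := Int.one_le_abs (by omega)
    calc (1:ℝ) ≤ |((v i : ℤ) - (w i : ℤ) : ℤ)| := by exact_mod_cast h2
      _ = |(v i : ℝ) - (w i : ℝ)| := by push_cast; rfl
  have heq : (-1 + 2*(v i : ℝ)/(j.1.1+1)) - (-1 + 2*(w i : ℝ)/(j.1.1+1))
      = 2*((v i : ℝ) - (w i : ℝ))/(j.1.1+1) := by ring
  rw [heq, abs_div, abs_of_pos hk, div_le_div_iff₀ hk hk]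
  have : |2*((v i:ℝ) - w i)| = 2 * |(v i:ℝ) - w i| := by
    rw [abs_mul]; norm_num
  rw [this]
  nlinarith [abs_nonneg ((v i:ℝ) - w i)]

/-- Rounding: every `a ∈ [-1,1]` is within `2/(k+1)` of a grid coordinate. -/
lemma round_exists (k : ℕ) (a : ℝ) (ha : a ∈ Set.Icc (-1:ℝ) 1) :
    ∃ m : ℕ, m ≤ k + 1 ∧ |(-1 + 2*(m:ℝ)/(k+1)) - a| ≤ 2/(k+1) := by
  have hk : (0:ℝ) < (k:ℝ)+1 := by positivity
  set u : ℝ := (a+1)*((k:ℝ)+1)/2 with hu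
  have hu0 : 0 ≤ u := by nlinarith [ha.1]
  have hu1 : u ≤ (k:ℝ)+1 := by nlinarith [ha.2]
  refine ⟨(⌊u⌋).toNat, ?_, ?_⟩
  · have h1 : (⌊u⌋ : ℝ) ≤ u := Int.floor_le u
    have h2 : ⌊u⌋ ≤ (k:ℤ)+1 := by
      have := Int.floor_le_floor (R := ℝ) hu1
      have hcast : ⌊((k:ℝ)+1)⌋ = (k:ℤ)+1 := by
        rw [show ((k:ℝ)+1) = (((k:ℤ)+1 : ℤ) : ℝ) by push_cast; ring, Int.floor_intCast]
      omega
    omega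
  · have hm : ((⌊u⌋).toNat : ℝ) = (⌊u⌋ : ℝ) := by
      exact_mod_cast Int.toNat_of_nonneg (Int.floor_nonneg.2 hu0)
    have h1 : (⌊u⌋ : ℝ) ≤ u := Int.floor_le u
    have h2 : u < (⌊u⌋ : ℝ) + 1 := Int.lt_floor_add_one u
    have ha' : a = -1 + 2*u/((k:ℝ)+1) := by
      field_simp [hu]
      rw [hu]; ring
    rw [ha', hm]
    have heq : (-1 + 2*(⌊u⌋:ℝ)/((k:ℝ)+1)) - (-1 + 2*u/((k:ℝ)+1)) = 2*((⌊u⌋:ℝ) - u)/((k:ℝ)+1) := by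
      ring
    rw [heq, abs_div, abs_of_pos hk, div_le_div_iff₀ hk hk]
    have : |2*((⌊u⌋:ℝ) - u)| ≤ 2 := by
      rw [abs_mul]
      have : |(⌊u⌋:ℝ) - u| ≤ 1 := by rw [abs_le]; constructor <;> linarith
      norm_num
      linarith
    nlinarith

/-- Density of grid patterns in 𝒦. -/
lemma pat_dense (A : Set (Euc d)) (hA : IsKSet d A) (η : ℝ) (hη : 0 < η) :
    ∃ j : J d, (∀ s ∈ patSet d j, ∃ a ∈ A, dist s a ≤ η) ∧
      (∀ a ∈ A, ∃ s ∈ patSet d j, dist s a ≤ η) := by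
  obtain ⟨k, hk⟩ := exists_nat_gt (2*(d:ℝ)/η)
  have hk1 : (0:ℝ) < (k:ℝ)+1 := by positivity
  have hkey : (d:ℝ) * (2/((k:ℝ)+1)) ≤ η := by
    rw [div_lt_iff₀ hη] at hk
    have h2 : 2*(d:ℝ) ≤ η * ((k:ℝ)+1) := by nlinarith
    rw [mul_div_assoc']
    rw [div_le_iff₀ hk1]
    linarith
  have h2k : (0:ℝ) ≤ 2/((k:ℝ)+1) := by positivity
  set P : (Fin d → ℕ) → Prop :=
    fun v => (∀ i, v i ≤ k+1) ∧ ∃ a ∈ A, ∀ i, |gpt d k v i - a i| ≤ 2/((k:ℝ)+1) with hP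
  letI : DecidablePred P := Classical.decPred P
  set T : Finset (Fin d → ℕ) :=
    Finset.filter P (Fintype.piFinset fun _ => Finset.range (k+2)) with hT
  have hmemT : ∀ v, v ∈ T ↔ P v := by
    intro v
    rw [hT, Finset.mem_filter]
    constructor
    · exact fun h => h.2
    · intro h
      refine ⟨?_, h⟩
      rw [Fintype.mem_piFinset]
      intro i
      rw [Finset.mem_range]
      have := h.1 i
      omega
  -- rounding a point of A to a grid vertex
  have hround : ∀ a ∈ A, ∃ v, P v ∧ ∀ i, |gpt d k v i - a i| ≤ 2/((k:ℝ)+1) := by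
    intro a ha
    have hac : a ∈ cube d := hA.2.2 ha
    have hch : ∀ i : Fin d, ∃ m : ℕ, m ≤ k + 1 ∧ |(-1 + 2*(m:ℝ)/((k:ℝ)+1)) - a i| ≤ 2/((k:ℝ)+1) :=
      fun i => round_exists k (a i) (hac i)
    choose v hv1 hv2 using hch
    refine ⟨v, ⟨hv1, a, ha, ?_⟩, ?_⟩
    · intro i; rw [gpt_apply]; exact hv2 i
    · intro i; rw [gpt_apply]; exact hv2 i
  have hTne : T.Nonempty := by
    obtain ⟨a, ha⟩ := hA.1
    obtain ⟨v, hv, -⟩ := hround a ha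
    exact ⟨v, (hmemT v).2 hv⟩
  refine ⟨⟨(k, T), hTne, fun v hv i => ((hmemT v).1 hv).1 i⟩, ?_, ?_⟩
  · rintro s ⟨v, hv, rfl⟩
    obtain ⟨-, a, ha, hcl⟩ := (hmemT v).1 hv
    refine ⟨a, ha, ?_⟩
    exact (dist_le_of_coords d _ a _ h2k hcl).trans hkey
  · intro a ha
    obtain ⟨v, hv, hcl⟩ := hround a ha
    refine ⟨gpt d k v, Set.mem_image_of_mem _ ((hmemT v).2 hv), ?_⟩
    exact (dist_le_of_coords d _ a _ h2k hcl).trans hkey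

/-- an enumeration of patterns -/
def enum : ℕ → J d := (exists_surjective_nat (J d)).choose

lemma enum_surj : Function.Surjective (enum d) := (exists_surjective_nat (J d)).choose_spec

/-- the pattern assigned to level `n ∈ ℤ` -/
def pat (n : ℤ) : J d := enum d (Nat.unpair n.natAbs).1

lemma pat_exists_ge (j : J d) (B : ℤ) : ∃ n : ℤ, B ≤ n ∧ pat d n = j := by
  obtain ⟨m, hm⟩ := enum_surj d j
  refine ⟨(Nat.pair m B.toNat : ℕ), ?_, ?_⟩
  · calc B ≤ (B.toNat : ℤ) := Int.self_le_toNat B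
      _ ≤ (Nat.pair m B.toNat : ℤ) := by exact_mod_cast Nat.right_le_pair m B.toNat
  · rw [pat, Int.natAbs_natCast, Nat.unpair_pair]
    exact hm

lemma pat_exists_le (j : J d) (B : ℤ) : ∃ n : ℤ, n ≤ B ∧ pat d n = j := by
  obtain ⟨m, hm⟩ := enum_surj d j
  refine ⟨-(Nat.pair m (-B).toNat : ℕ), ?_, ?_⟩
  · have h1 : (-B) ≤ ((-B).toNat : ℤ) := Int.self_le_toNat (-B)
    have h2 : ((-B).toNat : ℤ) ≤ (Nat.pair m (-B).toNat : ℤ) := by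
      exact_mod_cast Nat.right_le_pair m (-B).toNat
    omega
  · rw [pat]
    have : (-(Nat.pair m (-B).toNat : ℤ)).natAbs = Nat.pair m (-B).toNat := by
      rw [Int.natAbs_neg, Int.natAbs_natCast]
    rw [this, Nat.unpair_pair]
    exact hm

/-- level data -/
def pS (n : ℤ) : Set (Euc d) := patSet d (pat d n)
def pk (n : ℤ) : ℕ := (pat d n).1.1
def pa (n : ℤ) : Euc d := (patSet_nonempty d (pat d n)).choose

lemma pa_mem (n : ℤ) : pa d n ∈ pS d n := (patSet_nonempty d (pat d n)).choose_spec

lemma pS_subset_cube (n : ℤ) : pS d n ⊆ cube d := patSet_subset_cube d _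

lemma pS_finite (n : ℤ) : (pS d n).Finite := patSet_finite d _

lemma pS_sep {n : ℤ} {s t : Euc d} (hs : s ∈ pS d n) (ht : t ∈ pS d n) (hst : s ≠ t) :
    ∃ i, 2/((pk d n : ℝ)+1) ≤ |s i - t i| := patSet_sep d _ hs ht hst

/-- separation constant of the scaled digit set at level `n` -/
def gam (n : ℤ) : ℝ := 1/(3*((pk d n : ℝ)+1))

lemma gam_pos (n : ℤ) : 0 < gam d n := by rw [gam]; positivity

lemma gam_le (n : ℤ) : gam d n ≤ 1/3 := by
  rw [gam]
  rw [div_le_div_iff₀ (by positivity) (by norm_num)]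
  have : (0:ℝ) ≤ (pk d n : ℝ) := Nat.cast_nonneg _
  linarith

/-- digit set at level `n`: pattern scaled by 1/6 around its base point. -/
def dig (n : ℤ) : Set (Euc d) := (fun s => (6:ℝ)⁻¹ • (s - pa d n)) '' pS d n

lemma dig_zero_mem (n : ℤ) : (0 : Euc d) ∈ dig d n :=
  ⟨pa d n, pa_mem d n, by simp⟩

lemma dig_finite (n : ℤ) : (dig d n).Finite := (pS_finite d n).image _

lemma dig_coord {n : ℤ} {z : Euc d} (hz : z ∈ dig d n) (i : Fin d) : |z i| ≤ 1/3 := by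
  obtain ⟨s, hs, rfl⟩ := hz
  beta_reduce
  have h1 : |s i| ≤ 1 := (mem_cube_iff d s).1 (pS_subset_cube d n hs) i
  have h2 : |pa d n i| ≤ 1 := (mem_cube_iff d _).1 (pS_subset_cube d n (pa_mem d n)) i
  have : ((6:ℝ)⁻¹ • (s - pa d n)) i = 6⁻¹ * (s i - pa d n i) := rfl
  rw [this, abs_mul, abs_sub_comm]
  have := abs_sub_abs_le_abs_sub (pa d n i) (s i)
  have habs : |s i - pa d n i| ≤ 2 := by
    have := abs_sub (s i) (pa d n i)
    calc |s i - pa d n i| ≤ |s i| + |pa d n i| := abs_sub _ _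
      _ ≤ 2 := by linarith
  rw [abs_sub_comm] at habs
  calc |(6:ℝ)⁻¹| * |pa d n i - s i| ≤ 6⁻¹ * 2 := by
        rw [abs_of_pos (by norm_num : (0:ℝ) < (6:ℝ)⁻¹)]
        have : (0:ℝ) ≤ 6⁻¹ := by norm_num
        nlinarith [abs_nonneg (pa d n i - s i)]
    _ ≤ 1/3 := by norm_num

lemma dig_sep {n : ℤ} {z w : Euc d} (hz : z ∈ dig d n) (hw : w ∈ dig d n) (hzw : z ≠ w) :
    ∃ i, gam d n ≤ |z i - w i| := by
  obtain ⟨s, hs, rfl⟩ := hz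
  obtain ⟨t, ht, rfl⟩ := hw
  have hst : s ≠ t := by
    rintro rfl; exact hzw rfl
  obtain ⟨i, hi⟩ := pS_sep d hs ht hst
  refine ⟨i, ?_⟩
  have h1 : ((6:ℝ)⁻¹ • (s - pa d n)) i - ((6:ℝ)⁻¹ • (t - pa d n)) i = 6⁻¹ * (s i - t i) := by
    show (6:ℝ)⁻¹ * (s i - pa d n i) - (6:ℝ)⁻¹ * (t i - pa d n i) = _
    ring
  beta_reduce
  rw [h1, abs_mul, abs_of_pos (by norm_num : (0:ℝ) < (6:ℝ)⁻¹), gam]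
  have hpk : (0:ℝ) < (pk d n : ℝ) + 1 := by positivity
  have hkey : 1/(3*((pk d n:ℝ)+1)) = 6⁻¹ * (2/((pk d n:ℝ)+1)) := by
    field_simp; ring
  rw [hkey]
  exact mul_le_mul_of_nonneg_left hi (by norm_num)

/-- contraction ratio from level `n` to level `n+1` -/
def bet (n : ℤ) : ℝ := gam d n / (100 * 2 ^ n.natAbs)

lemma bet_pos (n : ℤ) : 0 < bet d n := by
  rw [bet]; have := gam_pos d n; positivity

lemma bet_le_inv_pow (n : ℤ) : bet d n ≤ (1/2) ^ n.natAbs := by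
  rw [bet]
  have h1 : gam d n ≤ 1/3 := gam_le d n
  have h2 : (0:ℝ) < 2 ^ n.natAbs := by positivity
  rw [div_le_iff₀ (by positivity)]
  have : (1/2:ℝ)^n.natAbs * (100 * 2^n.natAbs) = 100 := by
    rw [one_div, inv_pow]
    field_simp
  rw [this]
  linarith

lemma bet_le_half (n : ℤ) : bet d n ≤ 1/2 := by
  rw [bet]
  have h1 : gam d n ≤ 1/3 := gam_le d n
  have h2 : (1:ℝ) ≤ 2 ^ n.natAbs := one_le_pow₀ (by norm_num)
  have h3 : (0:ℝ) < 100 * 2 ^ n.natAbs := by positivity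
  rw [div_le_iff₀ h3]
  nlinarith [gam_pos d n]

/-- scales: positive direction -/
def cp : ℕ → ℝ
  | 0 => 1
  | k+1 => cp k * bet d (k : ℤ)

/-- scales: negative direction -/
def cm : ℕ → ℝ
  | 0 => 1
  | k+1 => cm k / bet d (-(k+1) : ℤ)

/-- the scale of level `n ∈ ℤ` -/
def sc (n : ℤ) : ℝ := if 0 ≤ n then cp d n.toNat else cm d (-n).toNat

lemma cp_pos (k : ℕ) : 0 < cp d k := by
  induction k with
  | zero => norm_num [cp]
  | succ k ih => rw [cp]; exact mul_pos ih (bet_pos d _)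

lemma cm_pos (k : ℕ) : 0 < cm d k := by
  induction k with
  | zero => norm_num [cm]
  | succ k ih => rw [cm]; exact div_pos ih (bet_pos d _)

lemma sc_pos (n : ℤ) : 0 < sc d n := by
  rw [sc]; split
  · exact cp_pos d _
  · exact cm_pos d _

lemma sc_zero : sc d 0 = 1 := by rw [sc]; norm_num [cp]

lemma sc_succ (n : ℤ) : sc d (n+1) = sc d n * bet d n := by
  rcases le_or_gt 0 n with h | h
  · have h1 : (0:ℤ) ≤ n + 1 := by omega
    rw [sc, sc, if_pos h1, if_pos h]
    have h2 : (n+1).toNat = n.toNat + 1 := by omega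
    rw [h2, cp]
    congr 1
    · congr 1
      omega
  · rcases eq_or_lt_of_le (by omega : n ≤ -1) with h1 | h1
    · subst h1
      rw [sc, sc, if_pos (by norm_num), if_neg (by norm_num)]
      have h2 : ((-(-1):ℤ)).toNat = 1 := by norm_num
      rw [h2, cm]
      have hb := bet_pos d (-(0+1) : ℤ)
      norm_num [cp, cm] at *
      field_simp
    · have h2 : n + 1 < 0 := by omega
      rw [sc, sc, if_neg (by omega), if_neg (by omega)]
      have h3 : (-n).toNat = (-(n+1)).toNat + 1 := by omega
      rw [h3, cm]
      have h4 : (-(((-(n+1)).toNat : ℤ) + 1)) = n := by omega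
      rw [h4]
      have hb := bet_pos d n
      field_simp

lemma sc_add_nat (n : ℤ) (k : ℕ) : sc d (n + k) ≤ sc d n * (1/2)^k := by
  induction k with
  | zero => simp
  | succ k ih =>
      have h1 : (n + (k+1:ℕ) : ℤ) = (n + k) + 1 := by push_cast; ring
      rw [h1, sc_succ]
      have h2 : sc d (n + k) * bet d (n+k) ≤ (sc d n * (1/2)^k) * (1/2) := by
        apply mul_le_mul ih (bet_le_half d _) (le_of_lt (bet_pos d _))
        have := sc_pos d n
        positivity
      calc sc d (n+k) * bet d (n+k) ≤ (sc d n * (1/2)^k) * (1/2) := h2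
        _ = sc d n * (1/2)^(k+1) := by ring

lemma sc_antitone {m n : ℤ} (h : m ≤ n) : sc d n ≤ sc d m := by
  have h1 : n = m + (n - m).toNat := by omega
  rw [h1]
  calc sc d (m + (n-m).toNat) ≤ sc d m * (1/2)^(n-m).toNat := sc_add_nat d m _
    _ ≤ sc d m * 1 := by
        apply mul_le_mul_of_nonneg_left _ (le_of_lt (sc_pos d m))
        apply pow_le_one₀ <;> norm_num
    _ = sc d m := mul_one _

lemma sc_strictAnti {m n : ℤ} (h : m < n) : sc d n < sc d m := by
  have h1 : sc d n ≤ sc d (m+1) := sc_antitone d (by omega)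
  have h2 : sc d (m+1) < sc d m := by
    rw [sc_succ]
    nth_rewrite 2 [← mul_one (sc d m)]
    apply mul_lt_mul_of_pos_left _ (sc_pos d m)
    calc bet d m ≤ 1/2 := bet_le_half d m
      _ < 1 := by norm_num
  linarith

lemma sc_nat_le (k : ℕ) : sc d (k:ℤ) ≤ (1/2)^k := by
  have := sc_add_nat d 0 k
  rw [zero_add, sc_zero, one_mul] at this
  exact this

lemma two_pow_le_sc_neg (k : ℕ) : (2:ℝ)^k ≤ sc d (-(k:ℤ)) := by
  induction k with
  | zero => simp [sc_zero]
  | succ k ih =>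
      have h1 : sc d (-(k:ℤ)) = sc d (-((k+1:ℕ):ℤ)) * bet d (-((k+1:ℕ):ℤ)) := by
        rw [← sc_succ]
        congr 1
        push_cast
        ring
      have h2 : bet d (-((k+1:ℕ):ℤ)) ≤ 1/2 := bet_le_half d _
      have h3 := bet_pos d (-((k+1:ℕ):ℤ))
      have h4 := sc_pos d (-((k+1:ℕ):ℤ))
      have h5 : (2:ℝ)^k ≤ sc d (-((k+1:ℕ):ℤ)) * (1/2) := by
        calc (2:ℝ)^k ≤ sc d (-(k:ℤ)) := ih
          _ = sc d (-((k+1:ℕ):ℤ)) * bet d (-((k+1:ℕ):ℤ)) := h1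
          _ ≤ sc d (-((k+1:ℕ):ℤ)) * (1/2) := by
              apply mul_le_mul_of_nonneg_left h2 (le_of_lt h4)
      calc (2:ℝ)^(k+1) = (2:ℝ)^k * 2 := by ring
        _ ≤ (sc d (-((k+1:ℕ):ℤ)) * (1/2)) * 2 := by linarith
        _ = sc d (-((k+1:ℕ):ℤ)) := by ring

lemma tail_summable (n : ℤ) : Summable (fun k : ℕ => sc d (n + 1 + k)) := by
  apply Summable.of_nonneg_of_le (fun k => le_of_lt (sc_pos d _))
    (fun k => sc_add_nat d (n+1) k)
  exact (summable_geometric_of_lt_one (by norm_num) (by norm_num)).mul_left _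

lemma tail_sum_le (n : ℤ) : ∑' k : ℕ, sc d (n + 1 + k) ≤ 2 * sc d (n+1) := by
  have h1 : ∑' k : ℕ, sc d (n + 1 + k) ≤ ∑' k : ℕ, sc d (n+1) * (1/2)^k := by
    apply Summable.tsum_le_tsum (fun k => sc_add_nat d (n+1) k) (tail_summable d n)
    exact (summable_geometric_of_lt_one (by norm_num) (by norm_num)).mul_left _
  have h2 : ∑' k : ℕ, sc d (n+1) * (1/2)^k = sc d (n+1) * 2 := by
    rw [tsum_mul_left]
    congr 1
    exact tsum_geometric_two
  linarith

/-- digit sequences -/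
def IsDig (D : ℤ → Euc d) : Prop :=
  (∀ n, D n ∈ dig d n) ∧ ∃ M : ℕ, ∀ n : ℤ, n < -(M:ℤ) → D n = 0

lemma norm_le_of_coords (z : Euc d) (ε : ℝ) (hε : 0 ≤ ε) (h : ∀ i, |z i| ≤ ε) :
    ‖z‖ ≤ d * ε := by
  have := dist_le_of_coords d z 0 ε hε (by intro i; simpa using h i)
  simpa using this

lemma isDig_summable {D : ℤ → Euc d} (hD : IsDig d D) :
    Summable (fun n : ℤ => sc d n • D n) := by
  apply Summable.of_nat_of_neg
  · apply Summable.of_norm_bounded (g := fun k : ℕ => ((d:ℝ)/3) * (1/2)^k)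
    · exact (summable_geometric_of_lt_one (by norm_num) (by norm_num)).mul_left _
    · intro k
      rw [norm_smul, Real.norm_eq_abs, abs_of_pos (sc_pos d _)]
      have h1 : ‖D (k:ℤ)‖ ≤ (d:ℝ) * (1/3) :=
        norm_le_of_coords d _ _ (by norm_num) (fun i => dig_coord d (hD.1 _) i)
      have h2 : sc d (k:ℤ) ≤ (1/2)^k := sc_nat_le d k
      have h3 : (0:ℝ) ≤ ‖D (k:ℤ)‖ := norm_nonneg _
      have h4 := sc_pos d (k:ℤ)
      calc sc d (k:ℤ) * ‖D (k:ℤ)‖ ≤ (1/2)^k * ((d:ℝ)*(1/3)) := by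
            apply mul_le_mul h2 h1 h3 (by positivity)
        _ = ((d:ℝ)/3) * (1/2)^k := by ring
  · obtain ⟨M, hM⟩ := hD.2
    apply summable_of_ne_finset_zero (s := Finset.range (M+1))
    intro k hk
    rw [Finset.mem_range] at hk
    have : (-(k:ℤ)) < -(M:ℤ) := by omega
    rw [hM _ this, smul_zero]

def IsRep (x : Euc d) (D : ℤ → Euc d) : Prop :=
  IsDig d D ∧ HasSum (fun n : ℤ => sc d n • D n) x

/-- The universal set `E`. -/
def BigE : Set (Euc d) := {x | ∃ D, IsRep d x D}

lemma zero_mem_bigE : (0 : Euc d) ∈ BigE d := by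
  refine ⟨fun _ => 0, ⟨⟨fun n => dig_zero_mem d n, 0, fun n _ => rfl⟩, ?_⟩⟩
  simpa using hasSum_zero

lemma rep_update {x : Euc d} {D : ℤ → Euc d} (h : IsRep d x D) (n : ℤ) {z : Euc d}
    (hz : z ∈ dig d n) :
    IsRep d (x + sc d n • (z - D n)) (Function.update D n z) := by
  classical
  obtain ⟨⟨hd1, M, hM⟩, hsum⟩ := h
  refine ⟨⟨?_, max M n.natAbs, ?_⟩, ?_⟩
  · intro m
    rcases eq_or_ne m n with rfl | hmn
    · rw [Function.update_self]; exact hz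
    · rw [Function.update_of_ne hmn]; exact hd1 m
  · intro m hm
    have hmn : m ≠ n := by
      have : -(n.natAbs : ℤ) ≤ n := by omega
      omega
    rw [Function.update_of_ne hmn]
    apply hM
    omega
  · have h1 := hsum.update n (sc d n • z)
    have h2 : Function.update (fun m => sc d m • D m) n (sc d n • z)
        = fun m => sc d m • Function.update D n z m := by
      funext m
      rcases eq_or_ne m n with rfl | hmn
      · rw [Function.update_self, Function.update_self]
      · rw [Function.update_of_ne hmn, Function.update_of_ne hmn]
    rw [h2] at h1
    have h3 : sc d n • z - sc d n • D n + x = x + sc d n • (z - D n) := by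
      rw [smul_sub]; abel
    rw [h3] at h1
    exact h1

/-- master bound for the tail of a digit series -/
lemma head_tail_bound (g : ℤ → ℝ) (S : ℝ) (N : ℤ) (b : ℝ) (hb : 0 ≤ b)
    (hg : HasSum g S) (h0 : ∀ n : ℤ, n < N → g n = 0)
    (hbd : ∀ n : ℤ, N < n → |g n| ≤ b * sc d n) :
    |S - g N| ≤ 2 * b * sc d (N+1) := by
  classical
  have h1 : HasSum (Function.update g N 0) (0 - g N + S) := hg.update N 0
  set g' := Function.update g N 0 with hg'
  set e : ℕ → ℤ := fun k => N + 1 + k with he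
  have hinj : Function.Injective e := by
    intro a b' hab
    simp only [he] at hab
    omega
  have hoff : ∀ m ∉ Set.range e, g' m = 0 := by
    intro m hm
    have hmN : m ≤ N := by
      by_contra hc
      push_neg at hc
      exact hm ⟨(m - (N+1)).toNat, by simp only [he]; omega⟩
    rcases eq_or_lt_of_le hmN with rfl | hlt
    · rw [hg', Function.update_self]
    · rw [hg', Function.update_of_ne (by omega)]
      exact h0 m hlt
  have h2 : HasSum (g' ∘ e) (0 - g N + S) := (hinj.hasSum_iff hoff).2 h1
  have hbd' : ∀ k : ℕ, |g' (e k)| ≤ b * sc d (N + 1 + k) := by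
    intro k
    rw [hg', Function.update_of_ne (by simp only [he]; omega)]
    exact hbd _ (by simp only [he]; omega)
  have hsummaj : Summable (fun k : ℕ => b * sc d (N + 1 + k)) :=
    (tail_summable d N).mul_left b
  have hsumabs : Summable (fun k : ℕ => |g' (e k)|) :=
    Summable.of_nonneg_of_le (fun k => abs_nonneg _) hbd' hsummaj
  have h3 : |0 - g N + S| ≤ ∑' k : ℕ, |g' (e k)| := by
    rw [← h2.tsum_eq]
    simpa [Real.norm_eq_abs] using norm_tsum_le_tsum_norm (f := g' ∘ e) (by simpa using hsumabs)
  have h4 : ∑' k : ℕ, |g' (e k)| ≤ ∑' k : ℕ, b * sc d (N + 1 + k) :=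
    Summable.tsum_le_tsum hbd' hsumabs hsummaj
  have h5 : ∑' k : ℕ, b * sc d (N + 1 + k) ≤ b * (2 * sc d (N+1)) := by
    rw [tsum_mul_left]
    apply mul_le_mul_of_nonneg_left (tail_sum_le d N) hb
  have h6 : |S - g N| = |0 - g N + S| := by ring_nf
  rw [h6]
  calc |0 - g N + S| ≤ ∑' k : ℕ, |g' (e k)| := h3
    _ ≤ ∑' k : ℕ, b * sc d (N + 1 + k) := h4
    _ ≤ b * (2 * sc d (N+1)) := h5
    _ = 2 * b * sc d (N+1) := by ring

lemma rep_diff {x x' : Euc d} {D D' : ℤ → Euc d} (hx : IsRep d x D) (hx' : IsRep d x' D')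
    (N : ℤ) (hag : ∀ n : ℤ, n < N → D n = D' n) (i : Fin d) :
    |(x' - x) i - sc d N * (D' N i - D N i)| ≤ (4/3) * sc d (N+1) := by
  have hsub : HasSum (fun n : ℤ => sc d n • (D' n - D n)) (x' - x) := by
    have h := hx'.2.sub hx.2
    have heq : (fun n : ℤ => sc d n • D' n - sc d n • D n)
        = (fun n : ℤ => sc d n • (D' n - D n)) := by
      funext n; rw [smul_sub]
    rwa [heq] at h
  have hproj : HasSum (fun n : ℤ => sc d n * (D' n i - D n i)) ((x' - x) i) := by
    have h := (EuclideanSpace.proj (𝕜 := ℝ) i).hasSum hsub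
    have heq : (fun n : ℤ => (EuclideanSpace.proj (𝕜 := ℝ) i) (sc d n • (D' n - D n)))
        = (fun n : ℤ => sc d n * (D' n i - D n i)) := by
      funext n
      show (sc d n • (D' n - D n)) i = _
      rw [PiLp.smul_apply, PiLp.sub_apply, smul_eq_mul]
    rw [heq] at h
    exact h
  have h0 : ∀ n : ℤ, n < N → sc d n * (D' n i - D n i) = 0 := by
    intro n hn
    rw [hag n hn]
    ring
  have hbd : ∀ n : ℤ, N < n → |sc d n * (D' n i - D n i)| ≤ (2/3) * sc d n := by
    intro n _
    rw [abs_mul, abs_of_pos (sc_pos d n)]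
    have h1 : |D' n i| ≤ 1/3 := dig_coord d (hx'.1.1 n) i
    have h2 : |D n i| ≤ 1/3 := dig_coord d (hx.1.1 n) i
    have h3 : |D' n i - D n i| ≤ 2/3 := by
      calc |D' n i - D n i| ≤ |D' n i| + |D n i| := abs_sub _ _
        _ ≤ 2/3 := by linarith
    have := sc_pos d n
    nlinarith
  have := head_tail_bound d _ _ N (2/3) (by norm_num) hproj h0 hbd
  calc |(x' - x) i - sc d N * (D' N i - D N i)| ≤ 2 * (2/3) * sc d (N+1) := this
    _ = (4/3) * sc d (N+1) := by ring

lemma rep_far {x x' : Euc d} {D D' : ℤ → Euc d} (hx : IsRep d x D) (hx' : IsRep d x' D')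
    (N : ℤ) (hag : ∀ n : ℤ, n < N → D n = D' n) (hne : D N ≠ D' N) :
    ∃ i, 98 * sc d (N+1) ≤ |(x' - x) i| := by
  obtain ⟨i, hi⟩ := dig_sep d (hx'.1.1 N) (hx.1.1 N) (Ne.symm hne)
  refine ⟨i, ?_⟩
  have h1 := rep_diff d hx hx' N hag i
  have h2 : sc d N * gam d N = 100 * 2^N.natAbs * sc d (N+1) := by
    rw [sc_succ, bet]
    field_simp
  have h3 : sc d N * gam d N ≤ sc d N * |D' N i - D N i| :=
    mul_le_mul_of_nonneg_left hi (le_of_lt (sc_pos d N))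
  have h4 : (1:ℝ) ≤ 2^N.natAbs := one_le_pow₀ (by norm_num)
  have h5 := sc_pos d (N+1)
  have habs : |sc d N * (D' N i - D N i)| - |(x' - x) i|
      ≤ |(x' - x) i - sc d N * (D' N i - D N i)| := by
    have h := abs_sub_abs_le_abs_sub (sc d N * (D' N i - D N i)) ((x' - x) i)
    rwa [abs_sub_comm] at h
  have hcomp : |sc d N * (D' N i - D N i)| = sc d N * |D' N i - D N i| := by
    rw [abs_mul, abs_of_pos (sc_pos d N)]
  nlinarith [mul_nonneg (sub_nonneg.2 h4) h5.le]

lemma first_diff {D D' : ℤ → Euc d} (hD : IsDig d D) (hD' : IsDig d D') (hne : D ≠ D') :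
    ∃ N : ℤ, D N ≠ D' N ∧ ∀ n : ℤ, n < N → D n = D' n := by
  obtain ⟨M, hM⟩ := hD.2
  obtain ⟨M', hM'⟩ := hD'.2
  obtain ⟨m0, hm0⟩ := Function.ne_iff.1 hne
  obtain ⟨N, hN1, hN2⟩ := Int.exists_least_of_bdd (P := fun n => D n ≠ D' n)
    ⟨-(max M M' : ℕ), by
      intro z hz
      by_contra hc
      push_neg at hc
      have h1 : D z = 0 := hM z (by omega)
      have h2 : D' z = 0 := hM' z (by omega)
      exact hz (h1.trans h2.symm)⟩ ⟨m0, hm0⟩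
  refine ⟨N, hN1, fun n hn => ?_⟩
  by_contra hc
  have := hN2 n hc
  omega

/-- The fundamental zoom estimate: zooming in on `x ∈ E` at scale `3 * sc N` shows,
up to error `d * bet N`, the digit pattern at level `N` recentred at `x`'s digit. -/
lemma zoom_est {x : Euc d} {D : ℤ → Euc d} (hx : IsRep d x D) (N : ℤ) :
    hausdorffDist (zoom d x (3 * sc d N) (BigE d))
      ((fun z => (3:ℝ)⁻¹ • (z - D N)) '' dig d N) ≤ d * bet d N := by
  have hsN := sc_pos d N
  have hbN := bet_pos d N
  set t : ℝ := 3 * sc d N with ht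
  have htpos : 0 < t := by rw [ht]; positivity
  apply hausdorffDist_le_of_mem_dist
  · positivity
  · rintro p ⟨⟨x', hx'E, rfl⟩, hcube⟩
    obtain ⟨D', hD'⟩ := hx'E
    by_cases hDD : D = D'
    · refine ⟨(3:ℝ)⁻¹ • (D N - D N), ⟨D N, hx.1.1 N, rfl⟩, ?_⟩
      have hxx : x' = x := hD'.2.unique (hDD ▸ hx.2)
      rw [hxx]
      simp [dist_nonneg]
      positivity
    · obtain ⟨n₀, hn₀ne, hn₀ag⟩ := first_diff d hx.1 hD'.1 hDD
      rcases lt_or_ge n₀ N with hlt | hge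
      · -- impossible: the point would be outside the cube
        exfalso
        obtain ⟨i, hi⟩ := rep_far d hx hD' n₀ hn₀ag hn₀ne
        have hscm : sc d N ≤ sc d (n₀+1) := sc_antitone d (by omega)
        have hple : |((fun y => t⁻¹ • (y - x)) x') i| ≤ 1 :=
          (mem_cube_iff d _).1 hcube i
        have hpi : ((fun y => t⁻¹ • (y - x)) x') i = t⁻¹ * ((x' - x) i) := by
          show (t⁻¹ • (x' - x)) i = _
          rw [PiLp.smul_apply, smul_eq_mul]
        rw [hpi, abs_mul, abs_of_pos (by positivity : (0:ℝ) < t⁻¹)] at hple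
        have h98 : 98 * sc d N ≤ |(x' - x) i| := by
          calc 98 * sc d N ≤ 98 * sc d (n₀+1) := by linarith
            _ ≤ |(x' - x) i| := hi
        have : t⁻¹ * |(x' - x) i| ≥ t⁻¹ * (98 * sc d N) :=
          mul_le_mul_of_nonneg_left h98 (by positivity)
        have hval : t⁻¹ * (98 * sc d N) = 98/3 := by
          rw [ht]; field_simp
        rw [hval] at this
        linarith
      · -- same prefix below N: the point is near the recentred pattern
        have hag : ∀ n : ℤ, n < N → D n = D' n := fun n hn => hn₀ag n (by omega)
        refine ⟨(3:ℝ)⁻¹ • (D' N - D N), ⟨D' N, hD'.1.1 N, rfl⟩, ?_⟩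
        have hcoord : ∀ i, |((fun y => t⁻¹ • (y - x)) x') i - ((3:ℝ)⁻¹ • (D' N - D N)) i|
            ≤ (4/9) * bet d N := by
          intro i
          have h1 := rep_diff d hx hD' N hag i
          have hpi : ((fun y => t⁻¹ • (y - x)) x') i = t⁻¹ * ((x' - x) i) := by
            show (t⁻¹ • (x' - x)) i = _
            rw [PiLp.smul_apply, smul_eq_mul]
          have hqi : ((3:ℝ)⁻¹ • (D' N - D N)) i = 3⁻¹ * (D' N i - D N i) := by
            rw [PiLp.smul_apply, PiLp.sub_apply, smul_eq_mul]
          rw [hpi, hqi]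
          have hkey : t⁻¹ * ((x' - x) i) - 3⁻¹ * (D' N i - D N i)
              = t⁻¹ * (((x' - x) i) - sc d N * (D' N i - D N i)) := by
            rw [ht]; field_simp
          rw [hkey, abs_mul, abs_of_pos (by positivity : (0:ℝ) < t⁻¹)]
          have h2 : t⁻¹ * |(x' - x) i - sc d N * (D' N i - D N i)|
              ≤ t⁻¹ * ((4/3) * sc d (N+1)) := mul_le_mul_of_nonneg_left h1 (by positivity)
          have h3 : t⁻¹ * ((4/3) * sc d (N+1)) = (4/9) * bet d N := by
            rw [ht, sc_succ]
            field_simp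
            ring
          linarith [h2, h3.symm.le]
        have hd1 := dist_le_of_coords d _ _ ((4/9) * bet d N) (by positivity) hcoord
        calc dist ((fun y => t⁻¹ • (y - x)) x') ((3:ℝ)⁻¹ • (D' N - D N))
            ≤ (d:ℝ) * ((4/9) * bet d N) := hd1
          _ ≤ d * bet d N := by
              have : (0:ℝ) ≤ (d:ℝ) := Nat.cast_nonneg d
              nlinarith
  · rintro q ⟨z, hz, rfl⟩
    have hrep := rep_update d hx N hz
    refine ⟨(3:ℝ)⁻¹ • (z - D N), ⟨?_, ?_⟩, by simp [dist_nonneg]; positivity⟩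
    · refine ⟨x + sc d N • (z - D N), ⟨_, hrep⟩, ?_⟩
      show t⁻¹ • (x + sc d N • (z - D N) - x) = (3:ℝ)⁻¹ • (z - D N)
      rw [add_sub_cancel_left, smul_smul]
      congr 1
      rw [ht]
      field_simp
    · rw [mem_cube_iff]
      intro i
      have hqi : (((3:ℝ)⁻¹ • (z - D N)) i) = 3⁻¹ * (z i - D N i) := by
        rw [PiLp.smul_apply, PiLp.sub_apply, smul_eq_mul]
      rw [hqi, abs_mul, abs_of_pos (by norm_num : (0:ℝ) < (3:ℝ)⁻¹)]
      have h1 : |z i| ≤ 1/3 := dig_coord d hz i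
      have h2 : |D N i| ≤ 1/3 := dig_coord d (hx.1.1 N) i
      have h3 : |z i - D N i| ≤ 2/3 := by
        calc |z i - D N i| ≤ |z i| + |D N i| := abs_sub _ _
          _ ≤ 2/3 := by linarith
      nlinarith [abs_nonneg (z i - D N i)]

/-- digit space for levels `≥ -M` -/
def digT (M : ℕ) : Type := Π k : ℕ, ↥(dig d ((k:ℤ) - M))

instance (M : ℕ) : Nonempty (digT d M) := ⟨fun k => ⟨0, dig_zero_mem d _⟩⟩

instance (M : ℕ) (k : ℕ) : Finite ↥(dig d ((k:ℤ) - M)) := (dig_finite d _).to_subtype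

instance (M : ℕ) : TopologicalSpace (digT d M) := by unfold digT; infer_instance

instance (M : ℕ) : CompactSpace (digT d M) := by unfold digT; infer_instance

lemma valM_summable (M : ℕ) (σ : digT d M) :
    Summable (fun k : ℕ => sc d ((k:ℤ) - M) • (σ k : Euc d)) := by
  apply Summable.of_norm_bounded (g := fun k : ℕ => ((d:ℝ) * sc d (-(M:ℤ))) * (1/2)^k)
  · exact (summable_geometric_of_lt_one (by norm_num) (by norm_num)).mul_left _
  · intro k
    rw [norm_smul, Real.norm_eq_abs, abs_of_pos (sc_pos d _)]
    have h1 : ‖(σ k : Euc d)‖ ≤ (d:ℝ) * (1/3) :=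
      norm_le_of_coords d _ _ (by norm_num) (fun i => dig_coord d (σ k).2 i)
    have h2 : sc d ((k:ℤ) - M) ≤ sc d (-(M:ℤ)) * (1/2)^k := by
      have := sc_add_nat d (-(M:ℤ)) k
      rwa [show (-(M:ℤ) + k) = (k:ℤ) - M by ring] at this
    have h3 := sc_pos d ((k:ℤ) - M)
    have h4 := sc_pos d (-(M:ℤ))
    have h5 : (0:ℝ) ≤ ‖(σ k : Euc d)‖ := norm_nonneg _
    have h6 : (0:ℝ) ≤ (1/2:ℝ)^k := by positivity
    calc sc d ((k:ℤ) - M) * ‖(σ k : Euc d)‖ ≤ (sc d (-(M:ℤ)) * (1/2)^k) * ((d:ℝ) * (1/3)) := by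
          apply mul_le_mul h2 h1 h5 (by positivity)
      _ ≤ ((d:ℝ) * sc d (-(M:ℤ))) * (1/2)^k := by nlinarith [Nat.cast_nonneg (α := ℝ) d]

def valM (M : ℕ) (σ : digT d M) : Euc d := ∑' k : ℕ, sc d ((k:ℤ) - M) • (σ k : Euc d)

lemma valM_continuous (M : ℕ) : Continuous (valM d M) := by
  apply continuous_tsum (u := fun k : ℕ => ((d:ℝ) * sc d (-(M:ℤ))) * (1/2)^k)
  · intro k
    exact (continuous_subtype_val.comp (continuous_apply k : Continuous fun σ : digT d M => σ k)).const_smul (sc d ((k:ℤ) - M))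
  · exact (summable_geometric_of_lt_one (by norm_num) (by norm_num)).mul_left _
  · intro k σ
    rw [norm_smul, Real.norm_eq_abs, abs_of_pos (sc_pos d _)]
    have h1 : ‖(σ k : Euc d)‖ ≤ (d:ℝ) * (1/3) :=
      norm_le_of_coords d _ _ (by norm_num) (fun i => dig_coord d (σ k).2 i)
    have h2 : sc d ((k:ℤ) - M) ≤ sc d (-(M:ℤ)) * (1/2)^k := by
      have := sc_add_nat d (-(M:ℤ)) k
      rwa [show (-(M:ℤ) + k) = (k:ℤ) - M by ring] at this
    have h3 := sc_pos d ((k:ℤ) - M)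
    have h4 := sc_pos d (-(M:ℤ))
    have h5 : (0:ℝ) ≤ ‖(σ k : Euc d)‖ := norm_nonneg _
    calc sc d ((k:ℤ) - M) * ‖(σ k : Euc d)‖ ≤ (sc d (-(M:ℤ)) * (1/2)^k) * ((d:ℝ) * (1/3)) := by
          apply mul_le_mul h2 h1 h5 (by positivity)
      _ ≤ ((d:ℝ) * sc d (-(M:ℤ))) * (1/2)^k := by nlinarith [Nat.cast_nonneg (α := ℝ) d,
          (by positivity : (0:ℝ) ≤ (1/2:ℝ)^k)]

def EMset (M : ℕ) : Set (Euc d) := Set.range (valM d M)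

lemma eMset_compact (M : ℕ) : IsCompact (EMset d M) :=
  isCompact_range (valM_continuous d M)

lemma mem_eMset_iff (M : ℕ) (x : Euc d) :
    x ∈ EMset d M ↔ ∃ D, IsRep d x D ∧ ∀ n : ℤ, n < -(M:ℤ) → D n = 0 := by
  classical
  set e : ℕ → ℤ := fun k => (k:ℤ) - M with he
  have hinj : Function.Injective e := by
    intro a b hab
    simp only [he] at hab
    omega
  constructor
  · rintro ⟨σ, rfl⟩
    set D : ℤ → Euc d := fun n => if h : n < -(M:ℤ) then 0 else
      (σ ((n + M).toNat) : Euc d) with hD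
    have hDval : ∀ k : ℕ, D ((k:ℤ) - M) = (σ k : Euc d) := by
      intro k
      show (if h : ((k:ℤ) - M) < -(M:ℤ) then 0 else ((σ (((k:ℤ) - M) + M).toNat : Euc d))) = _
      have h1 : ¬ ((k:ℤ) - M < -(M:ℤ)) := by omega
      rw [dif_neg h1]
      have h2 : (((k:ℤ) - M) + M).toNat = k := by omega
      rw [h2]
    have hDdig : ∀ n, D n ∈ dig d n := by
      intro n
      show (if h : n < -(M:ℤ) then 0 else ((σ ((n + M).toNat) : Euc d))) ∈ dig d n
      split
      · exact dig_zero_mem d n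
      · next h =>
        have h2 := (σ ((n + M).toNat)).2
        have h3 : (((n + M).toNat : ℕ) : ℤ) = n + M := Int.toNat_of_nonneg (by omega)
        have e2 : dig d ((((n + M).toNat : ℕ) : ℤ) - M) = dig d n := by
          rw [h3, show n + (M:ℤ) - M = n from by ring]
        exact e2.subset h2
    have hsupp : ∀ n : ℤ, n < -(M:ℤ) → D n = 0 := by
      intro n hn
      show (if h : n < -(M:ℤ) then 0 else ((σ ((n + M).toNat) : Euc d))) = 0
      rw [dif_pos hn]
    refine ⟨D, ⟨⟨hDdig, M, hsupp⟩, ?_⟩, hsupp⟩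
    have hS := (valM_summable d M σ).hasSum
    have hcomp : (fun n : ℤ => sc d n • D n) ∘ e = fun k : ℕ => sc d ((k:ℤ) - M) • (σ k : Euc d) := by
      funext k
      show sc d ((k:ℤ) - M) • D ((k:ℤ) - M) = _
      rw [hDval]
    have hoff : ∀ n ∉ Set.range e, sc d n • D n = 0 := by
      intro n hn
      have h1 : n < -(M:ℤ) := by
        by_contra hc
        push_neg at hc
        exact hn ⟨(n + M).toNat, by simp only [he]; omega⟩
      rw [hsupp n h1, smul_zero]
    have := (hinj.hasSum_iff hoff).1 (by rw [hcomp]; exact hS)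
    exact this
  · rintro ⟨D, hD, hsupp⟩
    refine ⟨fun k => ⟨D ((k:ℤ) - M), hD.1.1 _⟩, ?_⟩
    have hoff : ∀ n ∉ Set.range e, sc d n • D n = 0 := by
      intro n hn
      have h1 : n < -(M:ℤ) := by
        by_contra hc
        push_neg at hc
        exact hn ⟨(n + M).toNat, by simp only [he]; omega⟩
      rw [hsupp n h1, smul_zero]
    have h2 : HasSum ((fun n : ℤ => sc d n • D n) ∘ e) x := (hinj.hasSum_iff hoff).2 hD.2
    have h3 : ((fun n : ℤ => sc d n • D n) ∘ e)
        = fun k : ℕ => sc d ((k:ℤ) - M) • D ((k:ℤ) - M) := rfl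
    unfold valM
    rw [h3] at h2
    exact h2.tsum_eq

lemma eMset_subset_bigE (M : ℕ) : EMset d M ⊆ BigE d := by
  intro x hx
  obtain ⟨D, hD, -⟩ := (mem_eMset_iff d M x).1 hx
  exact ⟨D, hD⟩

lemma bigE_closed : IsClosed (BigE d) := by
  apply isClosed_of_closure_subset
  intro x hx
  set R : ℝ := ‖x‖ + 1 with hR
  have hR1 : 1 ≤ R := by rw [hR]; have := norm_nonneg x; linarith
  obtain ⟨M, hM⟩ := exists_nat_ge R
  have hM2 : R ≤ (2:ℝ)^M := by
    calc R ≤ (M:ℝ) := hM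
      _ ≤ (2:ℝ)^M := by
          have := Nat.lt_two_pow_self (n := M)
          exact_mod_cast Nat.le_of_lt this
  have hsub : BigE d ∩ Metric.closedBall 0 R ⊆ EMset d M := by
    rintro y ⟨⟨D, hD⟩, hy⟩
    rw [mem_eMset_iff]
    refine ⟨D, hD, ?_⟩
    intro n hn
    by_contra hc
    have hzrep : IsRep d (0 : Euc d) (fun _ => 0) :=
      ⟨⟨fun m => dig_zero_mem d m, 0, fun _ _ => rfl⟩, by simpa using hasSum_zero⟩
    have hne : (fun _ : ℤ => (0 : Euc d)) ≠ D := by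
      intro h
      exact hc (congrFun h n).symm
    obtain ⟨n₀, hn₀ne, hn₀ag⟩ := first_diff d hzrep.1 hD.1 hne
    have hn₀n : n₀ ≤ n := by
      by_contra hcc
      push_neg at hcc
      exact hc (hn₀ag n hcc).symm
    obtain ⟨i, hi⟩ := rep_far d hzrep hD n₀ hn₀ag hn₀ne
    rw [sub_zero] at hi
    have hle1 : sc d (-(M:ℤ)) ≤ sc d (n₀+1) := sc_antitone d (by omega)
    have hle2 : (2:ℝ)^M ≤ sc d (-(M:ℤ)) := two_pow_le_sc_neg d M
    have hyc : |y i| ≤ R := by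
      have h1 := coord_le_dist d y 0 i
      simp only [PiLp.zero_apply, sub_zero] at h1
      have h2 : dist y (0 : Euc d) ≤ R := by
        rwa [Metric.mem_closedBall] at hy
      linarith
    have : 98 * R ≤ |y i| := by
      calc 98 * R ≤ 98 * (2:ℝ)^M := by linarith
        _ ≤ 98 * sc d (-(M:ℤ)) := by linarith
        _ ≤ 98 * sc d (n₀+1) := by linarith
        _ ≤ |y i| := hi
    linarith
  have hx2 : x ∈ closure (BigE d ∩ Metric.closedBall 0 R) := by
    rw [mem_closure_iff_nhds] at hx ⊢
    intro U hU
    have hball : Metric.ball (0 : Euc d) R ∈ nhds x := by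
      apply Metric.isOpen_ball.mem_nhds
      rw [Metric.mem_ball, dist_zero_right]
      rw [hR]; linarith
    obtain ⟨y, hy1, hy2⟩ := hx (U ∩ Metric.ball 0 R) (Filter.inter_mem hU hball)
    exact ⟨y, hy1.1, hy2, Metric.ball_subset_closedBall hy1.2⟩
  have hx3 : x ∈ closure (EMset d M) := closure_mono hsub hx2
  rw [IsClosed.closure_eq (eMset_compact d M).isClosed] at hx3
  exact eMset_subset_bigE d M hx3

lemma fx_eq (N : ℤ) (sN : Euc d) :
    (fun z => (3:ℝ)⁻¹ • (z - (6:ℝ)⁻¹ • (sN - pa d N))) '' dig d N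
      = (fun s => (18:ℝ)⁻¹ • (s - sN)) '' pS d N := by
  rw [dig, ← Set.image_comp]
  apply Set.image_congr
  intro s _
  show (3:ℝ)⁻¹ • ((6:ℝ)⁻¹ • (s - pa d N) - (6:ℝ)⁻¹ • (sN - pa d N)) = (18:ℝ)⁻¹ • (s - sN)
  rw [← smul_sub, smul_smul, show (s - pa d N) - (sN - pa d N) = s - sN from by abel]
  norm_num

lemma dH_target (N : ℤ) {sN : Euc d} {A : Set (Euc d)}
    {astar : Euc d} (hastar : astar ∈ A) (η η' : ℝ) (hη : 0 ≤ η) (hη' : 0 ≤ η')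
    (h1 : ∀ s ∈ pS d N, ∃ a ∈ A, dist s a ≤ η) (h2 : ∀ a ∈ A, ∃ s ∈ pS d N, dist s a ≤ η)
    (h3 : dist sN astar ≤ η') :
    hausdorffDist ((fun s => (18:ℝ)⁻¹ • (s - sN)) '' pS d N)
      ((fun y => (18:ℝ)⁻¹ • (y - astar)) '' A) ≤ (18:ℝ)⁻¹ * (η + η') := by
  have key : ∀ s a : Euc d, dist s a ≤ η →
      dist ((18:ℝ)⁻¹ • (s - sN)) ((18:ℝ)⁻¹ • (a - astar)) ≤ (18:ℝ)⁻¹ * (η + η') := by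
    intro s a hd
    rw [dist_eq_norm, ← smul_sub,
      show (s - sN) - (a - astar) = (s - a) - (sN - astar) from by abel,
      norm_smul, Real.norm_eq_abs, abs_of_pos (by norm_num : (0:ℝ) < (18:ℝ)⁻¹)]
    have hb : ‖(s - a) - (sN - astar)‖ ≤ η + η' := by
      calc ‖(s - a) - (sN - astar)‖ ≤ ‖s - a‖ + ‖sN - astar‖ := norm_sub_le _ _
        _ ≤ η + η' := by
            rw [← dist_eq_norm, ← dist_eq_norm]
            exact add_le_add hd h3
    nlinarith [norm_nonneg ((s - a) - (sN - astar))]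
  apply hausdorffDist_le_of_mem_dist (by positivity)
  · rintro p ⟨s, hs, rfl⟩
    obtain ⟨a, ha, hd⟩ := h1 s hs
    exact ⟨(18:ℝ)⁻¹ • (a - astar), ⟨a, ha, rfl⟩, key s a hd⟩
  · rintro q ⟨a, ha, rfl⟩
    obtain ⟨s, hs, hd⟩ := h2 a ha
    refine ⟨(18:ℝ)⁻¹ • (s - sN), ⟨s, hs, rfl⟩, ?_⟩
    rw [dist_comm]
    exact key s a hd

lemma target_isKSet {A : Set (Euc d)} (hA : IsKSet d A) {astar : Euc d} (hastar : astar ∈ A) :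
    IsKSet d ((fun y => (18:ℝ)⁻¹ • (y - astar)) '' A) := by
  refine ⟨hA.1.image _, hA.2.1.image (by fun_prop), ?_⟩
  rintro p ⟨y, hy, rfl⟩
  beta_reduce
  rw [mem_cube_iff]
  intro i
  have h1 : |y i| ≤ 1 := (mem_cube_iff d y).1 (hA.2.2 hy) i
  have h2 : |astar i| ≤ 1 := (mem_cube_iff d astar).1 (hA.2.2 hastar) i
  have h3 : (((18:ℝ)⁻¹ • (y - astar)) i) = 18⁻¹ * (y i - astar i) := by
    rw [PiLp.smul_apply, PiLp.sub_apply, smul_eq_mul]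
  rw [h3, abs_mul, abs_of_pos (by norm_num : (0:ℝ) < (18:ℝ)⁻¹)]
  have h4 : |y i - astar i| ≤ 2 := by
    calc |y i - astar i| ≤ |y i| + |astar i| := abs_sub _ _
      _ ≤ 2 := by linarith
  nlinarith [abs_nonneg (y i - astar i)]

lemma zoom_nonempty {x : Euc d} (hx : x ∈ BigE d) (t : ℝ) :
    (zoom d x t (BigE d)).Nonempty := by
  refine ⟨t⁻¹ • (x - x), ⟨x, hx, rfl⟩, ?_⟩
  rw [sub_self, smul_zero, mem_cube_iff]
  intro i
  show |(0 : Euc d) i| ≤ 1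
  norm_num

lemma zoom_target_est {x : Euc d} {D : ℤ → Euc d} (hx : IsRep d x D) (N : ℤ)
    {sN : Euc d} (hsN : sN ∈ pS d N) (hDN : D N = (6:ℝ)⁻¹ • (sN - pa d N))
    {A : Set (Euc d)} {astar : Euc d} (hastar : astar ∈ A)
    {η η' : ℝ} (hη : 0 ≤ η) (hη' : 0 ≤ η')
    (h1 : ∀ s ∈ pS d N, ∃ a ∈ A, dist s a ≤ η) (h2 : ∀ a ∈ A, ∃ s ∈ pS d N, dist s a ≤ η)
    (h3 : dist sN astar ≤ η') :
    hausdorffDist (zoom d x (3 * sc d N) (BigE d)) ((fun y => (18:ℝ)⁻¹ • (y - astar)) '' A)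
      ≤ d * bet d N + (18:ℝ)⁻¹ * (η + η') := by
  set Fx : Set (Euc d) := (fun z => (3:ℝ)⁻¹ • (z - D N)) '' dig d N with hFx
  have hFxne : Fx.Nonempty := ⟨_, Set.mem_image_of_mem _ (dig_zero_mem d N)⟩
  have hFxbd : Bornology.IsBounded Fx := ((dig_finite d N).image _).isBounded
  have hzne : (zoom d x (3 * sc d N) (BigE d)).Nonempty := zoom_nonempty d ⟨D, hx⟩ _
  have hzbd : Bornology.IsBounded (zoom d x (3 * sc d N) (BigE d)) :=
    (cube_bounded d).subset (Set.inter_subset_right)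
  have hfin : EMetric.hausdorffEdist (zoom d x (3 * sc d N) (BigE d)) Fx ≠ ⊤ :=
    hausdorffEdist_ne_top_of_nonempty_of_bounded hzne hFxne hzbd hFxbd
  have htri := hausdorffDist_triangle hfin
    (t := Fx) (u := (fun y => (18:ℝ)⁻¹ • (y - astar)) '' A)
  have hz := zoom_est d hx N
  have hFxeq : Fx = (fun s => (18:ℝ)⁻¹ • (s - sN)) '' pS d N := by
    rw [hFx, hDN]
    exact fx_eq d N sN
  have hdt : hausdorffDist Fx ((fun y => (18:ℝ)⁻¹ • (y - astar)) '' A)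
      ≤ (18:ℝ)⁻¹ * (η + η') := by
    rw [hFxeq]
    exact dH_target d N hastar η η' hη hη' h1 h2 h3
  calc hausdorffDist (zoom d x (3 * sc d N) (BigE d)) ((fun y => (18:ℝ)⁻¹ • (y - astar)) '' A)
      ≤ hausdorffDist (zoom d x (3 * sc d N) (BigE d)) Fx
        + hausdorffDist Fx ((fun y => (18:ℝ)⁻¹ • (y - astar)) '' A) := htri
    _ ≤ d * bet d N + (18:ℝ)⁻¹ * (η + η') := add_le_add hz hdt

/-- Core convergence lemma: given levels `N i` whose patterns approximate `A` at rate
`1/(i+1)` and which escape to infinity, a subsequence of zooms converges to a scaled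
translate of `A`. -/
lemma core {x : Euc d} (hx : x ∈ BigE d) {A : Set (Euc d)} (hA : IsKSet d A)
    (N : ℕ → ℤ)
    (hclose1 : ∀ i, ∀ s ∈ pS d (N i), ∃ a ∈ A, dist s a ≤ 1/(i+1))
    (hclose2 : ∀ i, ∀ a ∈ A, ∃ s ∈ pS d (N i), dist s a ≤ 1/(i+1))
    (hgrow : ∀ i, i ≤ (N i).natAbs) :
    ∃ astar ∈ A, ∃ φ : ℕ → ℕ, StrictMono φ ∧
      Tendsto (fun i => hausdorffDist (zoom d x (3 * sc d (N (φ i))) (BigE d))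
        ((fun y => (18:ℝ)⁻¹ • (y - astar)) '' A)) atTop (nhds 0) := by
  obtain ⟨D, hD⟩ := hx
  have hdig : ∀ i, ∃ s, s ∈ pS d (N i) ∧ D (N i) = (6:ℝ)⁻¹ • (s - pa d (N i)) := by
    intro i
    obtain ⟨s, hs, heq⟩ := hD.1.1 (N i)
    exact ⟨s, hs, heq.symm⟩
  choose s hs hseq using hdig
  have haex : ∀ i, ∃ a ∈ A, dist (s i) a ≤ 1/((i:ℝ)+1) := fun i => hclose1 i (s i) (hs i)
  choose a ha hda using haex
  obtain ⟨astar, hastar, φ, hφ, hconv⟩ := hA.2.1.tendsto_subseq ha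
  refine ⟨astar, hastar, φ, hφ, ?_⟩
  have hboundi : ∀ i, hausdorffDist (zoom d x (3 * sc d (N (φ i))) (BigE d))
      ((fun y => (18:ℝ)⁻¹ • (y - astar)) '' A)
      ≤ d * bet d (N (φ i)) + (18:ℝ)⁻¹ * (1/((φ i : ℝ)+1) + dist (s (φ i)) astar) := by
    intro i
    apply zoom_target_est d hD (N (φ i)) (hs (φ i)) (hseq (φ i)) hastar
      (by positivity) dist_nonneg (hclose1 (φ i)) (hclose2 (φ i)) le_rfl
  -- the majorant tends to 0
  have hphi : ∀ i, i ≤ φ i := fun i => hφ.le_apply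
  have hG : Tendsto (fun i : ℕ => (d:ℝ) * (1/2)^i
      + (18:ℝ)⁻¹ * (1/((i:ℝ)+1) + (1/((i:ℝ)+1) + dist (a (φ i)) astar))) atTop (nhds 0) := by
    have t1 : Tendsto (fun i : ℕ => (1/2:ℝ)^i) atTop (nhds 0) :=
      tendsto_pow_atTop_nhds_zero_of_lt_one (by norm_num) (by norm_num)
    have t2 : Tendsto (fun i : ℕ => 1/((i:ℝ)+1)) atTop (nhds 0) :=
      tendsto_one_div_add_atTop_nhds_zero_nat
    have t3 : Tendsto (fun i : ℕ => dist (a (φ i)) astar) atTop (nhds 0) := by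
      have := tendsto_iff_dist_tendsto_zero.1 hconv
      exact this
    have := (t1.const_mul (d:ℝ)).add ((t2.add (t2.add t3)).const_mul ((18:ℝ)⁻¹))
    simpa using this
  apply squeeze_zero (fun i => hausdorffDist_nonneg) _ hG
  intro i
  have hb1 : bet d (N (φ i)) ≤ (1/2)^i := by
    calc bet d (N (φ i)) ≤ (1/2)^((N (φ i)).natAbs) := bet_le_inv_pow d _
      _ ≤ (1/2)^i := by
          apply pow_le_pow_of_le_one (by norm_num) (by norm_num)
          exact le_trans (hphi i) (hgrow (φ i))
  have hb2 : 1/((φ i : ℝ)+1) ≤ 1/((i:ℝ)+1) := by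
    apply one_div_le_one_div_of_le (by positivity)
    have h := hphi i
    have : (i:ℝ) ≤ (φ i : ℝ) := by exact_mod_cast h
    linarith
  have hb3 : dist (s (φ i)) astar ≤ 1/((i:ℝ)+1) + dist (a (φ i)) astar := by
    calc dist (s (φ i)) astar ≤ dist (s (φ i)) (a (φ i)) + dist (a (φ i)) astar :=
          dist_triangle _ _ _
      _ ≤ 1/((i:ℝ)+1) + dist (a (φ i)) astar := by
          have h := hda (φ i)
          have : (1:ℝ)/((φ i : ℝ)+1) ≤ 1/((i:ℝ)+1) := hb2
          linarith
  calc hausdorffDist (zoom d x (3 * sc d (N (φ i))) (BigE d))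
        ((fun y => (18:ℝ)⁻¹ • (y - astar)) '' A)
      ≤ d * bet d (N (φ i)) + (18:ℝ)⁻¹ * (1/((φ i : ℝ)+1) + dist (s (φ i)) astar) :=
        hboundi i
    _ ≤ (d:ℝ) * (1/2)^i + (18:ℝ)⁻¹ * (1/((i:ℝ)+1) + (1/((i:ℝ)+1) + dist (a (φ i)) astar)) := by
        have hd0 : (0:ℝ) ≤ (d:ℝ) := Nat.cast_nonneg d
        have := hb1
        have := hb2
        have := hb3
        nlinarith [dist_nonneg (x := s (φ i)) (y := astar)]

def seqUp (f : ℕ → J d) : ℕ → ℤ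
  | 0 => (pat_exists_ge d (f 0) 1).choose
  | (i+1) => (pat_exists_ge d (f (i+1)) (max (seqUp f i + 1) ((i:ℤ)+2))).choose

def seqDown (f : ℕ → J d) : ℕ → ℤ
  | 0 => (pat_exists_le d (f 0) (-1)).choose
  | (i+1) => (pat_exists_le d (f (i+1)) (min (seqDown f i - 1) (-(i:ℤ)-2))).choose

lemma seqUp_pat (f : ℕ → J d) (i : ℕ) : pat d (seqUp d f i) = f i := by
  cases i with
  | zero => exact (pat_exists_ge d (f 0) 1).choose_spec.2
  | succ i => exact (pat_exists_ge d (f (i+1)) _).choose_spec.2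

lemma seqDown_pat (f : ℕ → J d) (i : ℕ) : pat d (seqDown d f i) = f i := by
  cases i with
  | zero => exact (pat_exists_le d (f 0) (-1)).choose_spec.2
  | succ i => exact (pat_exists_le d (f (i+1)) _).choose_spec.2

lemma seqUp_lb (f : ℕ → J d) (i : ℕ) : (i:ℤ)+1 ≤ seqUp d f i := by
  cases i with
  | zero =>
      have := (pat_exists_ge d (f 0) 1).choose_spec.1
      simpa [seqUp] using this
  | succ i =>
      have h := (pat_exists_ge d (f (i+1)) (max (seqUp d f i + 1) ((i:ℤ)+2))).choose_spec.1
      have h2 : (i:ℤ)+2 ≤ max (seqUp d f i + 1) ((i:ℤ)+2) := le_max_right _ _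
      have : ((i+1:ℕ):ℤ)+1 = (i:ℤ)+2 := by push_cast; ring
      rw [this]
      exact le_trans h2 h

lemma seqDown_ub (f : ℕ → J d) (i : ℕ) : seqDown d f i ≤ -(i:ℤ)-1 := by
  cases i with
  | zero =>
      have := (pat_exists_le d (f 0) (-1)).choose_spec.1
      simpa [seqDown] using this
  | succ i =>
      have h := (pat_exists_le d (f (i+1)) (min (seqDown d f i - 1) (-(i:ℤ)-2))).choose_spec.1
      have h2 : min (seqDown d f i - 1) (-(i:ℤ)-2) ≤ -(i:ℤ)-2 := min_le_right _ _
      have h3 : -((i+1:ℕ):ℤ)-1 = -(i:ℤ)-2 := by push_cast; ring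
      rw [h3]
      exact le_trans h h2

lemma seqUp_mono (f : ℕ → J d) : StrictMono (seqUp d f) := by
  apply strictMono_nat_of_lt_succ
  intro i
  have h := (pat_exists_ge d (f (i+1)) (max (seqUp d f i + 1) ((i:ℤ)+2))).choose_spec.1
  have h2 : seqUp d f i + 1 ≤ max (seqUp d f i + 1) ((i:ℤ)+2) := le_max_left _ _
  show seqUp d f i < seqUp d f (i+1)
  have : seqUp d f (i+1) = (pat_exists_ge d (f (i+1)) _).choose := rfl
  omega

lemma seqDown_anti (f : ℕ → J d) : StrictAnti (seqDown d f) := by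
  apply strictAnti_nat_of_succ_lt
  intro i
  have h := (pat_exists_le d (f (i+1)) (min (seqDown d f i - 1) (-(i:ℤ)-2))).choose_spec.1
  have h2 : min (seqDown d f i - 1) (-(i:ℤ)-2) ≤ seqDown d f i - 1 := min_le_left _ _
  show seqDown d f (i+1) < seqDown d f i
  have : seqDown d f (i+1) = (pat_exists_le d (f (i+1)) _).choose := rfl
  omega

lemma exists_tangent {x : Euc d} (hx : x ∈ BigE d) {A : Set (Euc d)} (hA : IsKSet d A) :
    ∃ astar ∈ A, IsTangentSet d (BigE d) x ((fun y => (18:ℝ)⁻¹ • (y - astar)) '' A) := by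
  have hden : ∀ i : ℕ, ∃ j : J d, (∀ s ∈ patSet d j, ∃ a ∈ A, dist s a ≤ 1/((i:ℝ)+1)) ∧
      (∀ a ∈ A, ∃ s ∈ patSet d j, dist s a ≤ 1/((i:ℝ)+1)) :=
    fun i => pat_dense d A hA _ (by positivity)
  choose f hf1 hf2 using hden
  set N := seqUp d f with hN
  have hpS : ∀ i, pS d (N i) = patSet d (f i) := by
    intro i
    rw [pS, hN, seqUp_pat]
  have hclose1 : ∀ i, ∀ s ∈ pS d (N i), ∃ a ∈ A, dist s a ≤ 1/((i:ℝ)+1) := by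
    intro i
    rw [hpS i]
    exact hf1 i
  have hclose2 : ∀ i, ∀ a ∈ A, ∃ s ∈ pS d (N i), dist s a ≤ 1/((i:ℝ)+1) := by
    intro i
    rw [hpS i]
    exact hf2 i
  have hgrow : ∀ i, i ≤ (N i).natAbs := by
    intro i
    have h := seqUp_lb d f i
    have hNe : N i = seqUp d f i := by rw [hN]
    omega
  obtain ⟨astar, hastar, φ, hφ, hconv⟩ := core d hx hA N hclose1 hclose2 hgrow
  refine ⟨astar, hastar, target_isKSet d hA hastar,
    fun i => 3 * sc d (N (φ i)),
    fun i => by have := sc_pos d (N (φ i)); show (0:ℝ) < 3 * sc d (N (φ i)); linarith,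
    ?_, ?_, hconv⟩
  · intro i i' h
    have h1 : N (φ i) < N (φ i') := (seqUp_mono d f) (hφ h)
    have := sc_strictAnti d h1
    show 3 * sc d (N (φ i')) < 3 * sc d (N (φ i))
    linarith
  · apply squeeze_zero
      (fun i => by have := sc_pos d (N (φ i)); show (0:ℝ) ≤ 3 * sc d (N (φ i)); linarith)
      (g := fun i => 3 * (1/2)^i)
    · intro i
      have h1 : (i:ℤ) ≤ N (φ i) := by
        have ha := seqUp_lb d f (φ i)
        have hb := hφ.le_apply (x := i)
        have hNe : N (φ i) = seqUp d f (φ i) := by rw [hN]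
        omega
      have h2 : sc d (N (φ i)) ≤ sc d (i:ℤ) := sc_antitone d h1
      have h3 : sc d (i:ℤ) ≤ (1/2)^i := sc_nat_le d i
      linarith
    · have := tendsto_pow_atTop_nhds_zero_of_lt_one
        (by norm_num : (0:ℝ) ≤ 1/2) (by norm_num : (1/2:ℝ) < 1)
      simpa using this.const_mul (3:ℝ)

lemma exists_photo {x : Euc d} (hx : x ∈ BigE d) {A : Set (Euc d)} (hA : IsKSet d A) :
    ∃ astar ∈ A, IsPhotograph d (BigE d) x ((fun y => (18:ℝ)⁻¹ • (y - astar)) '' A) := by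
  have hden : ∀ i : ℕ, ∃ j : J d, (∀ s ∈ patSet d j, ∃ a ∈ A, dist s a ≤ 1/((i:ℝ)+1)) ∧
      (∀ a ∈ A, ∃ s ∈ patSet d j, dist s a ≤ 1/((i:ℝ)+1)) :=
    fun i => pat_dense d A hA _ (by positivity)
  choose f hf1 hf2 using hden
  set N := seqDown d f with hN
  have hpS : ∀ i, pS d (N i) = patSet d (f i) := by
    intro i
    rw [pS, hN, seqDown_pat]
  have hclose1 : ∀ i, ∀ s ∈ pS d (N i), ∃ a ∈ A, dist s a ≤ 1/((i:ℝ)+1) := by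
    intro i
    rw [hpS i]
    exact hf1 i
  have hclose2 : ∀ i, ∀ a ∈ A, ∃ s ∈ pS d (N i), dist s a ≤ 1/((i:ℝ)+1) := by
    intro i
    rw [hpS i]
    exact hf2 i
  have hgrow : ∀ i, i ≤ (N i).natAbs := by
    intro i
    have h := seqDown_ub d f i
    have hNe : N i = seqDown d f i := by rw [hN]
    omega
  obtain ⟨astar, hastar, φ, hφ, hconv⟩ := core d hx hA N hclose1 hclose2 hgrow
  refine ⟨astar, hastar, target_isKSet d hA hastar,
    fun i => 3 * sc d (N (φ i)),
    fun i => by have := sc_pos d (N (φ i)); show (0:ℝ) < 3 * sc d (N (φ i)); linarith,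
    ?_, ?_, hconv⟩
  · intro i i' h
    have h1 : N (φ i') < N (φ i) := (seqDown_anti d f) (hφ h)
    have := sc_strictAnti d h1
    show 3 * sc d (N (φ i)) < 3 * sc d (N (φ i'))
    linarith
  · apply tendsto_atTop_mono (f := fun i : ℕ => (2:ℝ)^i)
    · intro i
      have h1 : N (φ i) ≤ -(i:ℤ) := by
        have ha := seqDown_ub d f (φ i)
        have hb := hφ.le_apply (x := i)
        have hNe : N (φ i) = seqDown d f (φ i) := by rw [hN]
        omega
      have h2 : sc d (-(i:ℤ)) ≤ sc d (N (φ i)) := sc_antitone d h1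
      have h3 : (2:ℝ)^i ≤ sc d (-(i:ℤ)) := two_pow_le_sc_neg d i
      have h4 := sc_pos d (N (φ i))
      calc (2:ℝ)^i ≤ sc d (N (φ i)) := le_trans h3 h2
        _ ≤ 3 * sc d (N (φ i)) := by linarith
    · exact tendsto_pow_atTop_atTop_of_one_lt (by norm_num : (1:ℝ) < 2)

lemma subColl_trivial (𝒜 : Set (Set (Euc d))) (h : ∀ F ∈ 𝒜, IsKSet d F) :
    SubColl d 𝒜 (KColl d) := by
  refine ⟨1/2, by norm_num, ?_⟩
  intro F hF
  obtain ⟨a, ha⟩ := (h F hF).1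
  refine ⟨F, h F hF, 1, by norm_num, by norm_num, a, ha, a, ha, ?_⟩
  apply Set.image_congr
  intro y _
  rw [one_smul]

lemma subColl_K_tangents (x : Euc d) (hx : x ∈ BigE d) :
    SubColl d (KColl d) (Tangents d (BigE d) x) := by
  refine ⟨(19:ℝ)⁻¹, by norm_num, ?_⟩
  intro A hA
  obtain ⟨astar, hastar, htan⟩ := exists_tangent d hx hA
  refine ⟨(fun y => (18:ℝ)⁻¹ • (y - astar)) '' A, htan, (18:ℝ)⁻¹, by norm_num, ?_,
    astar, hastar, 0, ⟨astar, hastar, by simp⟩, ?_⟩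
  · rw [inv_inv]
    norm_num
  · apply (Set.image_congr (fun y _ => rfl)).trans
    symm
    have : (fun y : Euc d => y - 0) = id := by funext y; simp
    rw [this, Set.image_id]

lemma subColl_K_photographs (x : Euc d) (hx : x ∈ BigE d) :
    SubColl d (KColl d) (Photographs d (BigE d) x) := by
  refine ⟨(19:ℝ)⁻¹, by norm_num, ?_⟩
  intro A hA
  obtain ⟨astar, hastar, hph⟩ := exists_photo d hx hA
  refine ⟨(fun y => (18:ℝ)⁻¹ • (y - astar)) '' A, hph, (18:ℝ)⁻¹, by norm_num, ?_,
    astar, hastar, 0, ⟨astar, hastar, by simp⟩, ?_⟩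
  · rw [inv_inv]
    norm_num
  · apply (Set.image_congr (fun y _ => rfl)).trans
    symm
    have : (fun y : Euc d => y - 0) = id := by funext y; simp
    rw [this, Set.image_id]

end Rich

/-- There exists a closed set `E ⊆ ℝ^d` that is simultaneously globally rich and locally
rich: `P(E,x) ≈ 𝒦` and `Tan(E,x) ≈ 𝒦` for all `x ∈ E`. -/

theorem exists_globally_and_locally_rich (d : ℕ) (hd : 0 < d) :
    ∃ E : Set (Euc d), IsClosed E ∧ E.Nonempty ∧
      ∀ x ∈ E, ApproxColl d (Photographs d E x) (KColl d) ∧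
        ApproxColl d (Tangents d E x) (KColl d) := by
  refine ⟨Rich.BigE d, Rich.bigE_closed d, ⟨0, Rich.zero_mem_bigE d⟩, ?_⟩
  intro x hx
  constructor
  · exact ⟨Rich.subColl_trivial d _ (fun F hF => hF.1),
      Rich.subColl_K_photographs d x hx⟩
  · exact ⟨Rich.subColl_trivial d _ (fun F hF => hF.1),
      Rich.subColl_K_tangents d x hx⟩


end
end
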